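/- arXiv:2301.04300 — 11 statements merged into one kernel-verified Lean document; each statement's English description precedes it below -/
import Mathlib

section
/- Let n, k be positive natural numbers and let Y : [0,∞) × ℝ^n → ℝ^k be any map (thought of as the output trajectory t ↦ Y(t,x₀) of a forward complete system started from initial state x₀). Then the following are equivalent. (1) Y satisfies: (i) Lagrange output stability: for every R > 0 the set { |Y(t,x₀)| : x₀ ∈ ℝ^n, |x₀| < R, t ≥ 0 } is bounded; (ii) Lyapunov output stability: for every ε > 0 there exists δ > 0 such that |Y(t,x₀)| ≤ ε for all t ≥ 0 whenever |x₀| < δ; (iii) uniform global output attractivity: for every ε > 0 and every R > 0 there exists T > 0 such that |Y(t,x₀)| ≤ ε for all t ≥ T whenever |x₀| < R. (2) There exists a class KL function σ such that |Y(t,x₀)| ≤ σ(|x₀|, t) for all x₀ ∈ ℝ^n and all t ≥ 0. (Here |·| denotes the Euclidean norm.) -/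
/-!
Let `φ s t` be the largest output norm at times `≥ t` from initial states of norm `≤ s`. Lagrange
stability makes it finite; it is non-decreasing in `s`, non-increasing in `t`, tends to `0` as
`s → 0` by Lyapunov stability and as `t → ∞` by uniform attractivity. Averaging over `[s, 2 s]`
makes it continuous in `s` without losing any of this, since
`φ s t ≤ (1/s) ∫ₛ²ˢ φ r t dr ≤ φ (2 s) t`, and adding `s e⁻ᵗ` makes it strictly increasing: the
result is a class KL bound. Conversely a KL estimate gives the three stability properties directly.
-/

noncomputable section

/-- A function `σ : [0,∞) × [0,∞) → [0,∞)` is of class KL if for each fixed `t ≥ 0` the map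
`s ↦ σ s t` is continuous, strictly increasing and vanishes at `0`, and for each fixed `s ≥ 0`
the map `t ↦ σ s t` is non-increasing and tends to `0` at infinity. -/
def IsClassKL (σ : ℝ → ℝ → ℝ) : Prop :=
  (∀ s t, 0 ≤ s → 0 ≤ t → 0 ≤ σ s t) ∧
  (∀ t, 0 ≤ t → ContinuousOn (fun s => σ s t) (Set.Ici 0) ∧
    StrictMonoOn (fun s => σ s t) (Set.Ici 0) ∧ σ 0 t = 0) ∧
  (∀ s, 0 ≤ s → AntitoneOn (fun t => σ s t) (Set.Ici 0) ∧
    Filter.Tendsto (fun t => σ s t) Filter.atTop (nhds 0))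

open Set Filter Topology intervalIntegral

/-- The mean of `f` over `[s, 2 s]`, rescaled to `[1, 2]` so that `s = 0` needs no special case. -/
def dilationAverage (f : ℝ → ℝ) (s : ℝ) : ℝ := ∫ v in (1 : ℝ)..2, f (s * v)

section dilationAverage

variable {f g : ℝ → ℝ} {s : ℝ}

lemma Monotone.intervalIntegrable_comp_mul_left (hf : Monotone f) (hs : 0 ≤ s) (a b : ℝ) :
    IntervalIntegrable (fun v => f (s * v)) MeasureTheory.volume a b :=
  (hf.comp (monotone_mul_left_of_nonneg hs)).intervalIntegrable

@[simp] lemma dilationAverage_apply_zero (f : ℝ → ℝ) : dilationAverage f 0 = f 0 := by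
  norm_num [dilationAverage]

lemma le_dilationAverage (hf : Monotone f) (hs : 0 ≤ s) : f s ≤ dilationAverage f s := by
  calc f s = ∫ _ in (1 : ℝ)..2, f s := by norm_num
    _ ≤ dilationAverage f s :=
      integral_mono_on one_le_two intervalIntegrable_const
        (hf.intervalIntegrable_comp_mul_left hs 1 2)
        fun v hv => hf (le_mul_of_one_le_right hs hv.1)

lemma dilationAverage_le_two_mul (hf : Monotone f) (hs : 0 ≤ s) :
    dilationAverage f s ≤ f (2 * s) := by
  calc dilationAverage f s ≤ ∫ _ in (1 : ℝ)..2, f (2 * s) :=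
        integral_mono_on one_le_two (hf.intervalIntegrable_comp_mul_left hs 1 2)
          intervalIntegrable_const
          fun v hv => hf (by nlinarith [hv.2])
    _ = f (2 * s) := by norm_num

lemma dilationAverage_mono (hf : Monotone f) (hg : Monotone g) (hfg : f ≤ g) (hs : 0 ≤ s) :
    dilationAverage f s ≤ dilationAverage g s :=
  integral_mono_on one_le_two (hf.intervalIntegrable_comp_mul_left hs 1 2)
    (hg.intervalIntegrable_comp_mul_left hs 1 2) fun _ _ => hfg _

lemma monotoneOn_dilationAverage (hf : Monotone f) : MonotoneOn (dilationAverage f) (Ici 0) :=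
  fun _ ha _ _ hab => integral_mono_on one_le_two (hf.intervalIntegrable_comp_mul_left ha 1 2)
    (hf.intervalIntegrable_comp_mul_left (ha.trans hab) 1 2)
    fun _ hv => hf (mul_le_mul_of_nonneg_right hab (zero_le_one.trans hv.1))

/-- Away from `0` the average is `s⁻¹ (F (2s) - F s)` for a primitive `F` of `f`. -/
lemma continuousOn_Ioi_dilationAverage (hf : Monotone f) :
    ContinuousOn (dilationAverage f) (Ioi 0) := by
  have hint : ∀ a b, IntervalIntegrable f MeasureTheory.volume a b :=
    fun _ _ => hf.intervalIntegrable
  set F := fun x => ∫ u in (0 : ℝ)..x, f u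
  have hF : Continuous F := continuous_primitive hint 0
  have heq : EqOn (dilationAverage f) (fun s => s⁻¹ * (F (2 * s) - F s)) (Ioi 0) := by
    intro s hs
    rw [dilationAverage, integral_comp_mul_left _ (ne_of_gt hs), smul_eq_mul, mul_one,
      ← integral_interval_sub_left (hint 0 _) (hint 0 _), mul_comm s 2]
  refine ContinuousOn.congr ?_ heq
  exact continuousOn_inv₀.mono (fun s hs => ne_of_gt hs) |>.mul
    ((hF.comp (continuous_const_mul 2)).sub hF).continuousOn

lemma continuousOn_dilationAverage (hf : Monotone f) (h0 : ContinuousWithinAt f (Ici 0) 0) :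
    ContinuousOn (dilationAverage f) (Ici 0) := by
  intro s hs
  rcases (mem_Ici.1 hs).eq_or_lt with rfl | hs
  · have hmul : Tendsto (fun s : ℝ => 2 * s) (𝓝[≥] 0) (𝓝[≥] 0) := by
      simpa using (continuous_const_mul (2 : ℝ)).continuousWithinAt.tendsto_nhdsWithin
        (x := 0) (s := Ici 0) (t := Ici 0) fun _ hx => mul_nonneg zero_le_two hx
    have h2 : Tendsto (fun s => f (2 * s)) (𝓝[≥] 0) (𝓝 (f 0)) := h0.tendsto.comp hmul
    rw [ContinuousWithinAt, dilationAverage_apply_zero]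
    exact tendsto_of_tendsto_of_tendsto_of_le_of_le' h0 h2
      (eventually_nhdsWithin_of_forall fun s hs => le_dilationAverage hf hs)
      (eventually_nhdsWithin_of_forall fun s hs => dilationAverage_le_two_mul hf hs)
  · exact ((continuousOn_Ioi_dilationAverage hf).continuousAt (Ioi_mem_nhds hs)).continuousWithinAt

end dilationAverage

def klMajorant (φ : ℝ → ℝ → ℝ) (s t : ℝ) : ℝ :=
  dilationAverage (φ · t) s + s * Real.exp (-t)

section klMajorant

variable {φ : ℝ → ℝ → ℝ} (hφ_nonneg : ∀ s t, 0 ≤ φ s t) (hφ_mono : ∀ t, Monotone (φ · t))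
  (hφ_anti : ∀ s, Antitone (φ s))

include hφ_mono in
lemma le_klMajorant {s t : ℝ} (hs : 0 ≤ s) : φ s t ≤ klMajorant φ s t :=
  le_add_of_le_of_nonneg (le_dilationAverage (hφ_mono t) hs)
    (mul_nonneg hs (Real.exp_pos _).le)

include hφ_nonneg hφ_mono hφ_anti in
lemma isClassKL_klMajorant (hφ_zero : Tendsto (φ · 0) (𝓝[≥] 0) (𝓝 0))
    (hφ_atTop : ∀ s, Tendsto (φ s) atTop (𝓝 0)) : IsClassKL (klMajorant φ) := by
  have hφ_zero_zero : φ 0 0 = 0 := le_antisymm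
    (ge_of_tendsto hφ_zero (eventually_nhdsWithin_of_forall fun _ hs => hφ_mono 0 hs))
    (hφ_nonneg 0 0)
  have hφ_left_zero {t : ℝ} (ht : 0 ≤ t) : φ 0 t = 0 :=
    le_antisymm ((hφ_anti 0 ht).trans_eq hφ_zero_zero) (hφ_nonneg 0 t)
  refine ⟨fun s t hs _ => (hφ_nonneg s t).trans (le_klMajorant hφ_mono hs),
    fun t ht => ⟨?_, ?_, ?_⟩, fun s hs => ⟨?_, ?_⟩⟩
  · have h0 : ContinuousWithinAt (φ · t) (Ici 0) 0 := by
      rw [ContinuousWithinAt, hφ_left_zero ht]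
      exact tendsto_of_tendsto_of_tendsto_of_le_of_le tendsto_const_nhds hφ_zero
        (fun s => hφ_nonneg s t) (fun s => hφ_anti s ht)
    exact (continuousOn_dilationAverage (hφ_mono t) h0).add (by fun_prop)
  · exact fun a ha b hb hab => add_lt_add_of_le_of_lt
      (monotoneOn_dilationAverage (hφ_mono t) ha hb hab.le)
      (mul_lt_mul_of_pos_right hab (Real.exp_pos _))
  · simp [klMajorant, hφ_left_zero ht]
  · exact fun t₁ _ t₂ _ h => add_le_add
      (dilationAverage_mono (hφ_mono t₂) (hφ_mono t₁) (fun r => hφ_anti r h) hs)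
      (mul_le_mul_of_nonneg_left (Real.exp_le_exp.2 (neg_le_neg h)) hs)
  · have h_avg : Tendsto (fun t => dilationAverage (φ · t) s) atTop (𝓝 0) :=
      tendsto_of_tendsto_of_tendsto_of_le_of_le tendsto_const_nhds (hφ_atTop (2 * s))
        (fun t => (hφ_nonneg s t).trans (le_dilationAverage (hφ_mono t) hs))
        (fun t => dilationAverage_le_two_mul (hφ_mono t) hs)
    simpa [klMajorant] using h_avg.add (Real.tendsto_exp_neg_atTop_nhds_zero.const_mul s)

end klMajorant

section OutputStability

variable {E F : Type*} [SeminormedAddGroup E] [SeminormedAddGroup F] (Y : ℝ → E → F)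

def IsLagrangeOutputStable : Prop :=
  ∀ R : ℝ, 0 < R → ∃ C : ℝ, ∀ x₀ : E, ‖x₀‖ < R → ∀ t : ℝ, 0 ≤ t → ‖Y t x₀‖ ≤ C

def IsLyapunovOutputStable : Prop :=
  ∀ ε : ℝ, 0 < ε → ∃ δ : ℝ, 0 < δ ∧ ∀ x₀ : E, ‖x₀‖ < δ → ∀ t : ℝ, 0 ≤ t → ‖Y t x₀‖ ≤ ε

def IsUniformlyGloballyOutputAttractive : Prop :=
  ∀ ε R : ℝ, 0 < ε → 0 < R → ∃ T : ℝ, 0 < T ∧ ∀ x₀ : E, ‖x₀‖ < R → ∀ t : ℝ, T ≤ t → ‖Y t x₀‖ ≤ ε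

def HasKLEstimate (σ : ℝ → ℝ → ℝ) : Prop :=
  ∀ (x₀ : E) (t : ℝ), 0 ≤ t → ‖Y t x₀‖ ≤ σ ‖x₀‖ t

/-- `sSup` makes this `0` when the set is empty (`s < 0`) or unbounded. -/
def outputGauge (s t : ℝ) : ℝ :=
  sSup {‖Y τ x₀‖ | (x₀ : E) (τ : ℝ) (_ : ‖x₀‖ ≤ s) (_ : 0 ≤ τ) (_ : t ≤ τ)}

variable {Y}

lemma IsLagrangeOutputStable.bddAbove (hY : IsLagrangeOutputStable Y) (s t : ℝ) :
    BddAbove {‖Y τ x₀‖ | (x₀ : E) (τ : ℝ) (_ : ‖x₀‖ ≤ s) (_ : 0 ≤ τ) (_ : t ≤ τ)} := by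
  obtain ⟨C, hC⟩ := hY (|s| + 1) (by positivity)
  refine ⟨C, ?_⟩
  rintro _ ⟨x₀, τ, hx, hτ, -, rfl⟩
  exact hC x₀ (by linarith [le_abs_self s]) τ hτ

lemma outputGauge_nonneg (s t : ℝ) : 0 ≤ outputGauge Y s t :=
  Real.sSup_nonneg (by rintro _ ⟨x₀, τ, -, -, -, rfl⟩; exact norm_nonneg _)

lemma outputGauge_le {s t C : ℝ} (hC : 0 ≤ C)
    (h : ∀ x₀ τ, ‖x₀‖ ≤ s → 0 ≤ τ → t ≤ τ → ‖Y τ x₀‖ ≤ C) : outputGauge Y s t ≤ C :=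
  Real.sSup_le (by rintro _ ⟨x₀, τ, hx, hτ, htτ, rfl⟩; exact h x₀ τ hx hτ htτ) hC

namespace IsLagrangeOutputStable

variable (hY : IsLagrangeOutputStable Y)
include hY

lemma norm_le_outputGauge {s t τ : ℝ} {x₀ : E} (hx : ‖x₀‖ ≤ s) (hτ : 0 ≤ τ) (htτ : t ≤ τ) :
    ‖Y τ x₀‖ ≤ outputGauge Y s t :=
  le_csSup (hY.bddAbove s t) ⟨x₀, τ, hx, hτ, htτ, rfl⟩

lemma monotone_outputGauge (t : ℝ) : Monotone (outputGauge Y · t) :=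
  fun _ _ h => outputGauge_le (outputGauge_nonneg _ _)
    fun _ _ hx hτ htτ => hY.norm_le_outputGauge (hx.trans h) hτ htτ

lemma antitone_outputGauge (s : ℝ) : Antitone (outputGauge Y s) :=
  fun _ _ h => outputGauge_le (outputGauge_nonneg _ _)
    fun _ _ hx hτ htτ => hY.norm_le_outputGauge hx hτ (h.trans htτ)

end IsLagrangeOutputStable

lemma tendsto_zero_of_forall_eventually_le {α : Type*} {l : Filter α} {g : α → ℝ}
    (hg : ∀ a, 0 ≤ g a) (h : ∀ ε > 0, ∀ᶠ a in l, g a ≤ ε) : Tendsto g l (𝓝 0) :=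
  Metric.tendsto_nhds.2 fun ε hε => (h (ε / 2) (half_pos hε)).mono fun a ha => by
    rw [Real.dist_0_eq_abs, abs_of_nonneg (hg a)]
    linarith

lemma IsLyapunovOutputStable.tendsto_outputGauge (hY : IsLyapunovOutputStable Y) :
    Tendsto (outputGauge Y · 0) (𝓝[≥] 0) (𝓝 0) := by
  refine tendsto_zero_of_forall_eventually_le (fun s => outputGauge_nonneg s 0) fun ε hε => ?_
  obtain ⟨δ, hδ, hY⟩ := hY ε hε
  filter_upwards [nhdsWithin_le_nhds (Iio_mem_nhds hδ)] with s hs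
  exact outputGauge_le hε.le fun x₀ τ hx hτ _ => hY x₀ (hx.trans_lt hs) τ hτ

lemma IsUniformlyGloballyOutputAttractive.tendsto_outputGauge
    (hY : IsUniformlyGloballyOutputAttractive Y) (s : ℝ) :
    Tendsto (outputGauge Y s) atTop (𝓝 0) := by
  refine tendsto_zero_of_forall_eventually_le (outputGauge_nonneg s) fun ε hε => ?_
  obtain ⟨T, -, hY⟩ := hY ε (|s| + 1) hε (by positivity)
  filter_upwards [eventually_ge_atTop T] with t ht
  exact outputGauge_le hε.le fun x₀ τ hx _ htτ =>
    hY x₀ (by linarith [le_abs_self s]) τ (ht.trans htτ)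

theorem exists_isClassKL_hasKLEstimate (hLag : IsLagrangeOutputStable Y)
    (hLya : IsLyapunovOutputStable Y) (hAttr : IsUniformlyGloballyOutputAttractive Y) :
    ∃ σ, IsClassKL σ ∧ HasKLEstimate Y σ :=
  ⟨klMajorant (outputGauge Y),
    isClassKL_klMajorant outputGauge_nonneg hLag.monotone_outputGauge hLag.antitone_outputGauge
      hLya.tendsto_outputGauge hAttr.tendsto_outputGauge,
    fun _ _ ht => (hLag.norm_le_outputGauge le_rfl ht le_rfl).trans
      (le_klMajorant hLag.monotone_outputGauge (norm_nonneg _))⟩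

lemma IsClassKL.le_of_le {σ : ℝ → ℝ → ℝ} (hσ : IsClassKL σ) {s s' t t' : ℝ} (hs : 0 ≤ s)
    (hss' : s ≤ s') (ht' : 0 ≤ t') (htt' : t' ≤ t) : σ s t ≤ σ s' t' :=
  calc σ s t ≤ σ s t' := (hσ.2.2 s hs).1 ht' (ht'.trans htt') htt'
    _ ≤ σ s' t' := ((hσ.2.1 t' ht').2.1.monotoneOn) hs (hs.trans hss') hss'

namespace HasKLEstimate

variable {σ : ℝ → ℝ → ℝ} (hσ : IsClassKL σ) (hY : HasKLEstimate Y σ)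
include hσ hY

lemma isLagrangeOutputStable : IsLagrangeOutputStable Y :=
  fun R _ => ⟨σ R 0, fun x₀ hx t ht =>
    (hY x₀ t ht).trans (hσ.le_of_le (norm_nonneg _) hx.le le_rfl ht)⟩

lemma isLyapunovOutputStable : IsLyapunovOutputStable Y := by
  intro ε hε
  have hσ0 : Tendsto (σ · 0) (𝓝[≥] 0) (𝓝 0) := by
    simpa [ContinuousWithinAt, (hσ.2.1 0 le_rfl).2.2] using (hσ.2.1 0 le_rfl).1 0 self_mem_Ici
  obtain ⟨δ, hδ, hδε⟩ := Metric.mem_nhdsWithin_iff.1 (hσ0 (Iic_mem_nhds hε))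
  refine ⟨δ, hδ, fun x₀ hx t ht => (hY x₀ t ht).trans ?_⟩
  refine (hσ.le_of_le (norm_nonneg _) le_rfl le_rfl ht).trans (hδε ⟨?_, norm_nonneg x₀⟩)
  simpa [abs_of_nonneg (norm_nonneg x₀)] using hx

lemma isUniformlyGloballyOutputAttractive : IsUniformlyGloballyOutputAttractive Y := by
  intro ε R hε hR
  obtain ⟨T, hT⟩ := eventually_atTop.1 (((hσ.2.2 R hR.le).2).eventually (Iic_mem_nhds hε))
  refine ⟨max T 1, by positivity, fun x₀ hx t ht => ?_⟩
  have ht0 : 0 ≤ t := zero_le_one.trans ((le_max_right _ _).trans ht)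
  exact (hY x₀ t ht0).trans ((hσ.le_of_le (norm_nonneg _) hx.le ht0 le_rfl).trans
    (hT t ((le_max_left _ _).trans ht)))

end HasKLEstimate

end OutputStability

theorem ugaos_iff_KL_estimate_general {n k : ℕ}
    (Y : ℝ → EuclideanSpace ℝ (Fin n) → EuclideanSpace ℝ (Fin k)) :
    ((∀ R : ℝ, 0 < R → ∃ C : ℝ, ∀ x₀ : EuclideanSpace ℝ (Fin n),
        ‖x₀‖ < R → ∀ t : ℝ, 0 ≤ t → ‖Y t x₀‖ ≤ C) ∧
     (∀ ε : ℝ, 0 < ε → ∃ δ : ℝ, 0 < δ ∧ ∀ x₀ : EuclideanSpace ℝ (Fin n),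
        ‖x₀‖ < δ → ∀ t : ℝ, 0 ≤ t → ‖Y t x₀‖ ≤ ε) ∧
     (∀ ε R : ℝ, 0 < ε → 0 < R → ∃ T : ℝ, 0 < T ∧ ∀ x₀ : EuclideanSpace ℝ (Fin n),
        ‖x₀‖ < R → ∀ t : ℝ, T ≤ t → ‖Y t x₀‖ ≤ ε))
    ↔ ∃ σ : ℝ → ℝ → ℝ, IsClassKL σ ∧
        ∀ (x₀ : EuclideanSpace ℝ (Fin n)) (t : ℝ), 0 ≤ t → ‖Y t x₀‖ ≤ σ ‖x₀‖ t := by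
  constructor
  · rintro ⟨hLag, hLya, hAttr⟩
    exact exists_isClassKL_hasKLEstimate hLag hLya hAttr
  · rintro ⟨σ, hσ, hY⟩
    exact ⟨HasKLEstimate.isLagrangeOutputStable hσ hY,
      HasKLEstimate.isLyapunovOutputStable hσ hY,
      HasKLEstimate.isUniformlyGloballyOutputAttractive hσ hY⟩

/-- UGAOS (Lagrange output stability, Lyapunov output stability and uniform global output
attractivity) holds if and only if a class KL estimate holds. -/
theorem ugaos_iff_KL_estimate {n k : ℕ} (hn : 0 < n) (hk : 0 < k)
    (Y : ℝ → EuclideanSpace ℝ (Fin n) → EuclideanSpace ℝ (Fin k)) :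
    ((∀ R : ℝ, 0 < R → ∃ C : ℝ, ∀ x₀ : EuclideanSpace ℝ (Fin n),
        ‖x₀‖ < R → ∀ t : ℝ, 0 ≤ t → ‖Y t x₀‖ ≤ C) ∧
     (∀ ε : ℝ, 0 < ε → ∃ δ : ℝ, 0 < δ ∧ ∀ x₀ : EuclideanSpace ℝ (Fin n),
        ‖x₀‖ < δ → ∀ t : ℝ, 0 ≤ t → ‖Y t x₀‖ ≤ ε) ∧
     (∀ ε R : ℝ, 0 < ε → 0 < R → ∃ T : ℝ, 0 < T ∧ ∀ x₀ : EuclideanSpace ℝ (Fin n),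
        ‖x₀‖ < R → ∀ t : ℝ, T ≤ t → ‖Y t x₀‖ ≤ ε))
    ↔ ∃ σ : ℝ → ℝ → ℝ, IsClassKL σ ∧
        ∀ (x₀ : EuclideanSpace ℝ (Fin n)) (t : ℝ), 0 ≤ t → ‖Y t x₀‖ ≤ σ ‖x₀‖ t :=
  ugaos_iff_KL_estimate_general Y

end
end

section
/- Let n, p be positive natural numbers and let h : ℝ^n × ℝ^p → ℝ be a C^∞ map that satisfies h(0,θ) = 0 for all θ ∈ ℝ^p. Then there exists a C^∞ map ρ : ℝ^n × ℝ^p → [1,∞) such that |h(x,θ)| ≤ ρ(x,θ)·|x| for all (x,θ) ∈ ℝ^n × ℝ^p, where |x| denotes the Euclidean norm of x. -/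
/-! By the fundamental theorem of calculus along the segment from `(0, θ)` to `(x, θ)`,
`h (x, θ) = ∫₀¹ Dh(t x, θ) (x, 0) dt`, so `|h (x, θ)| ≤ ‖x‖ · ∫₀¹ ‖Dh(t x, θ)‖ dt`. The integral is
continuous in `(x, θ)`, and a smooth partition of unity yields a smooth function above it and
above `1`. -/

open scoped ContDiff
open Manifold

noncomputable section

section RadialBound

variable {E F G : Type*} [NormedAddCommGroup E] [NormedSpace ℝ E] [NormedAddCommGroup F]
  [NormedSpace ℝ F] [NormedAddCommGroup G] [NormedSpace ℝ G]

def radialDerivBound (h : E × F → G) (z : E × F) : ℝ :=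
  ∫ t in (0 : ℝ)..1, ‖fderiv ℝ h (t • z.1, z.2)‖

theorem continuous_radialDerivBound {h : E × F → G} (hh : ContDiff ℝ 1 h) :
    Continuous (radialDerivBound h) :=
  intervalIntegral.continuous_parametric_intervalIntegral_of_continuous'
    ((hh.continuous_fderiv one_ne_zero).comp (by fun_prop)).norm 0 1

theorem norm_le_radialDerivBound_mul [CompleteSpace G] {h : E × F → G} (hh : ContDiff ℝ 1 h)
    {θ : F} (h0 : h (0, θ) = 0) (x : E) :
    ‖h (x, θ)‖ ≤ radialDerivBound h (x, θ) * ‖x‖ := by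
  have hDh : Continuous fun t : ℝ => fderiv ℝ h (t • x, θ) :=
    (hh.continuous_fderiv one_ne_zero).comp (by fun_prop)
  have hderiv : ∀ t ∈ Set.uIcc (0 : ℝ) 1,
      HasDerivAt (fun t : ℝ => h (t • x, θ)) (fderiv ℝ h (t • x, θ) (x, 0)) t := fun t _ =>
    ((hh.differentiable one_ne_zero).differentiableAt.hasFDerivAt).comp_hasDerivAt t
      (((hasDerivAt_id t).smul_const x).prodMk (hasDerivAt_const t θ) |>.congr_deriv (by simp))
  have hftc : h (x, θ) = ∫ t in (0 : ℝ)..1, fderiv ℝ h (t • x, θ) (x, 0) := by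
    rw [intervalIntegral.integral_eq_sub_of_hasDerivAt hderiv
      ((hDh.clm_apply continuous_const).intervalIntegrable _ _)]
    simp [h0]
  have hpointwise (t : ℝ) : ‖fderiv ℝ h (t • x, θ) (x, 0)‖ ≤ ‖fderiv ℝ h (t • x, θ)‖ * ‖x‖ := by
    simpa [Prod.norm_def] using (fderiv ℝ h (t • x, θ)).le_opNorm (x, 0)
  calc ‖h (x, θ)‖ ≤ ∫ t in (0 : ℝ)..1, ‖fderiv ℝ h (t • x, θ)‖ * ‖x‖ := by
        rw [hftc]
        exact intervalIntegral.norm_integral_le_of_norm_le zero_le_one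
          (.of_forall fun t _ => hpointwise t) ((hDh.norm.mul continuous_const).intervalIntegrable _ _)
    _ = radialDerivBound h (x, θ) * ‖x‖ := intervalIntegral.integral_mul_const _ _

end RadialBound

theorem Continuous.exists_contDiff_ge {E : Type*} [NormedAddCommGroup E] [NormedSpace ℝ E]
    [FiniteDimensional ℝ E] {f : E → ℝ} (hf : Continuous f) :
    ∃ g : E → ℝ, ContDiff ℝ ∞ g ∧ ∀ x, f x ≤ g x := by
  obtain ⟨g, hg⟩ := exists_contMDiffMap_forall_mem_convex_of_local_const 𝓘(ℝ, E) (n := ⊤)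
    (t := fun x => Set.Ici (f x)) (fun _ => convex_Ici _) fun x =>
      ⟨f x + 1, (hf.continuousAt.eventually (gt_mem_nhds (lt_add_one (f x)))).mono
        fun _ hy => le_of_lt hy⟩
  exact ⟨g, contMDiff_iff_contDiff.mp g.contMDiff, hg⟩

theorem exists_smooth_bound_factor_general {n p : ℕ}
    (h : EuclideanSpace ℝ (Fin n) × EuclideanSpace ℝ (Fin p) → ℝ)
    (hsmooth : ContDiff ℝ ∞ h)
    (h0 : ∀ θ : EuclideanSpace ℝ (Fin p), h (0, θ) = 0) :
    ∃ ρ : EuclideanSpace ℝ (Fin n) × EuclideanSpace ℝ (Fin p) → ℝ,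
      ContDiff ℝ ∞ ρ ∧ (∀ z, 1 ≤ ρ z) ∧
      ∀ (x : EuclideanSpace ℝ (Fin n)) (θ : EuclideanSpace ℝ (Fin p)),
        |h (x, θ)| ≤ ρ (x, θ) * ‖x‖ := by
  have hC1 : ContDiff ℝ 1 h := hsmooth.of_le (by simp)
  obtain ⟨ρ, hρ, hρ_ge⟩ :=
    ((continuous_radialDerivBound hC1).max continuous_const).exists_contDiff_ge (E := _ × _)
  refine ⟨ρ, hρ, fun z => (le_max_right _ _).trans (hρ_ge z), fun x θ => ?_⟩
  calc |h (x, θ)| ≤ radialDerivBound h (x, θ) * ‖x‖ := norm_le_radialDerivBound_mul hC1 (h0 θ) x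
    _ ≤ ρ (x, θ) * ‖x‖ := by gcongr; exact (le_max_left _ _).trans (hρ_ge _)

/-- If `h : ℝⁿ × ℝᵖ → ℝ` is `C^∞` and `h(0,θ) = 0` for all `θ`, then there is a `C^∞` map
`ρ : ℝⁿ × ℝᵖ → [1,∞)` with `|h(x,θ)| ≤ ρ(x,θ)·|x|` everywhere. -/
theorem exists_smooth_bound_factor {n p : ℕ} (hn : 0 < n) (hp : 0 < p)
    (h : EuclideanSpace ℝ (Fin n) × EuclideanSpace ℝ (Fin p) → ℝ)
    (hsmooth : ContDiff ℝ ∞ h)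
    (h0 : ∀ θ : EuclideanSpace ℝ (Fin p), h (0, θ) = 0) :
    ∃ ρ : EuclideanSpace ℝ (Fin n) × EuclideanSpace ℝ (Fin p) → ℝ,
      ContDiff ℝ ∞ ρ ∧ (∀ z, 1 ≤ ρ z) ∧
      ∀ (x : EuclideanSpace ℝ (Fin n)) (θ : EuclideanSpace ℝ (Fin p)),
        |h (x, θ)| ≤ ρ (x, θ) * ‖x‖ :=
  exists_smooth_bound_factor_general h hsmooth h0

end
end

section
/- Let n, p be positive natural numbers, let h : ℝ^n × ℝ^p → ℝ be a C^∞ map with h(0,θ) = 0 for all θ ∈ ℝ^p, and let T : ℝ^n × ℝ^p → ℝ^n be a smooth parameterized family of diffeomorphisms of ℝ^n. Then there exists a C^∞ map ρ : ℝ^n × ℝ^p → [1,∞) such that |h(x,θ)| ≤ ρ(x,θ)·|T(x,θ)| for all (x,θ) ∈ ℝ^n × ℝ^p, where |·| denotes the Euclidean norm. -/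
open scoped ContDiff
open Topology Manifold Metric

noncomputable section

/-- A smooth parameterized family of diffeomorphisms: a `C^∞` map `T : E × F → E` with
`T(0,θ) = 0` for all `θ`, admitting a `C^∞` parameterized inverse. -/
def IsSmoothParamFamilyDiffeo {E F : Type*} [NormedAddCommGroup E] [NormedSpace ℝ E]
    [NormedAddCommGroup F] [NormedSpace ℝ F] (T : E × F → E) : Prop :=
  ContDiff ℝ ∞ T ∧ (∀ θ : F, T (0, θ) = 0) ∧
  ∃ S : E × F → E, ContDiff ℝ ∞ S ∧
    (∀ (z : E) (θ : F), T (S (z, θ), θ) = z) ∧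
    (∀ (x : E) (θ : F), S (T (x, θ), θ) = x)

/-!
Write `h(x,θ) = g(T(x,θ),θ)` with `g(z,θ) = h(S(z,θ),θ)`, a smooth map vanishing on `z = 0`.
The mean value inequality on a compact convex neighbourhood bounds `|g(z,θ)|` by `C‖z‖` locally,
so `|h| ≤ C‖T‖` near every point with a constant `C ≥ 1`. For each point the admissible values
of `ρ` form a convex set, so a smooth partition of unity glues these local constants into a
smooth `ρ`.
-/

theorem ContDiff.exists_eventually_norm_le_mul_norm_fst {E F G : Type*}
    [NormedAddCommGroup E] [NormedSpace ℝ E] [ProperSpace E]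
    [NormedAddCommGroup F] [NormedSpace ℝ F] [ProperSpace F]
    [NormedAddCommGroup G] [NormedSpace ℝ G]
    {g : E × F → G} (hg : ContDiff ℝ 1 g) (hg0 : ∀ θ, g (0, θ) = 0) (q₀ : E × F) :
    ∃ C, ∀ᶠ q in 𝓝 q₀, ‖g q‖ ≤ C * ‖q.1‖ := by
  set K := closedBall (0 : E) (‖q₀.1‖ + 1) ×ˢ closedBall q₀.2 1
  have hK : IsCompact K := (isCompact_closedBall _ _).prod (isCompact_closedBall _ _)
  have hKconv : Convex ℝ K := (convex_closedBall _ _).prod (convex_closedBall _ _)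
  have hKnhds : K ∈ 𝓝 q₀ := by
    refine prod_mem_nhds (closedBall_mem_nhds_of_mem ?_) (closedBall_mem_nhds _ one_pos)
    simp
  obtain ⟨C, hC⟩ := hK.exists_bound_of_continuousOn (hg.continuous_fderiv one_ne_zero).continuousOn
  refine ⟨C, ?_⟩
  filter_upwards [hKnhds] with q hq
  have h0K : ((0 : E), q.2) ∈ K := ⟨by simp; positivity, hq.2⟩
  have hmv := hKconv.norm_image_sub_le_of_norm_fderiv_le
    (fun w _ => (hg.differentiable one_ne_zero).differentiableAt) hC h0K hq
  have hnorm : ‖q - ((0 : E), q.2)‖ = ‖q.1‖ := by simp [Prod.norm_def]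
  rwa [hnorm, hg0, sub_zero] at hmv

theorem exists_contDiff_forall_one_le_and_le_mul {E : Type*} [NormedAddCommGroup E]
    [NormedSpace ℝ E] [FiniteDimensional ℝ E] {a b : E → ℝ} (hb : ∀ x, 0 ≤ b x)
    (hloc : ∀ x₀, ∃ C, ∀ᶠ x in 𝓝 x₀, a x ≤ C * b x) :
    ∃ ρ : E → ℝ, ContDiff ℝ ∞ ρ ∧ (∀ x, 1 ≤ ρ x) ∧ ∀ x, a x ≤ ρ x * b x := by
  set t : E → Set ℝ := fun x => Set.Ici 1 ∩ {r | a x ≤ r * b x}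
  have ht : ∀ x, Convex ℝ (t x) := fun x =>
    (convex_Ici 1).inter (convex_halfSpace_ge (LinearMap.mulRight ℝ (b x)).isLinear _)
  have htloc : ∀ x₀, ∃ c, ∀ᶠ x in 𝓝 x₀, c ∈ t x := by
    intro x₀
    obtain ⟨C, hC⟩ := hloc x₀
    refine ⟨max 1 C, ?_⟩
    filter_upwards [hC] with x hx
    exact ⟨Set.mem_Ici.mpr (le_max_left _ _), hx.trans (mul_le_mul_of_nonneg_right (le_max_right _ _) (hb x))⟩
  obtain ⟨ρ, hρ⟩ := exists_contMDiffMap_forall_mem_convex_of_local_const (n := ⊤) 𝓘(ℝ, E) ht htloc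
  exact ⟨ρ, contMDiff_iff_contDiff.mp ρ.contMDiff, fun x => (hρ x).1, fun x => (hρ x).2⟩

theorem exists_smooth_bound_factor_diffeo_general {n p : ℕ}
    (h : EuclideanSpace ℝ (Fin n) × EuclideanSpace ℝ (Fin p) → ℝ)
    (hsmooth : ContDiff ℝ ∞ h)
    (h0 : ∀ θ : EuclideanSpace ℝ (Fin p), h (0, θ) = 0)
    (T : EuclideanSpace ℝ (Fin n) × EuclideanSpace ℝ (Fin p) → EuclideanSpace ℝ (Fin n))
    (hT : IsSmoothParamFamilyDiffeo T) :
    ∃ ρ : EuclideanSpace ℝ (Fin n) × EuclideanSpace ℝ (Fin p) → ℝ,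
      ContDiff ℝ ∞ ρ ∧ (∀ z, 1 ≤ ρ z) ∧
      ∀ (x : EuclideanSpace ℝ (Fin n)) (θ : EuclideanSpace ℝ (Fin p)),
        |h (x, θ)| ≤ ρ (x, θ) * ‖T (x, θ)‖ := by
  obtain ⟨hTsmooth, hT0, S, hSsmooth, -, hST⟩ := hT
  set g := fun q : EuclideanSpace ℝ (Fin n) × EuclideanSpace ℝ (Fin p) => h (S q, q.2)
  have hg : ContDiff ℝ 1 g := (hsmooth.comp (hSsmooth.prodMk contDiff_snd)).of_le (by simp)
  have hS0 : ∀ θ, S (0, θ) = 0 := fun θ => by simpa [hT0 θ] using hST 0 θ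
  have hg0 : ∀ θ, g (0, θ) = 0 := fun θ => by simp [g, hS0, h0]
  have hloc : ∀ q₀, ∃ C, ∀ᶠ q in 𝓝 q₀, |h q| ≤ C * ‖T q‖ := by
    intro q₀
    obtain ⟨C, hC⟩ := hg.exists_eventually_norm_le_mul_norm_fst hg0 (T q₀, q₀.2)
    have hΦ : Continuous fun q => (T q, q.2) := hTsmooth.continuous.prodMk continuous_snd
    refine ⟨C, ?_⟩
    filter_upwards [hΦ.continuousAt.eventually hC] with ⟨x, θ⟩ hq
    simpa [g, hST] using hq
  obtain ⟨ρ, hρ, hρ1, hρh⟩ :=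
    exists_contDiff_forall_one_le_and_le_mul (fun q => norm_nonneg (T q)) hloc
  exact ⟨ρ, hρ, hρ1, fun x θ => hρh (x, θ)⟩

/-- If `h : ℝⁿ × ℝᵖ → ℝ` is `C^∞` with `h(0,θ) = 0`, and `T` is a smooth parameterized family of
diffeomorphisms of `ℝⁿ`, then there is a `C^∞` map `ρ : ℝⁿ × ℝᵖ → [1,∞)` with
`|h(x,θ)| ≤ ρ(x,θ)·|T(x,θ)|` everywhere. -/
theorem exists_smooth_bound_factor_diffeo {n p : ℕ} (hn : 0 < n) (hp : 0 < p)
    (h : EuclideanSpace ℝ (Fin n) × EuclideanSpace ℝ (Fin p) → ℝ)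
    (hsmooth : ContDiff ℝ ∞ h)
    (h0 : ∀ θ : EuclideanSpace ℝ (Fin p), h (0, θ) = 0)
    (T : EuclideanSpace ℝ (Fin n) × EuclideanSpace ℝ (Fin p) → EuclideanSpace ℝ (Fin n))
    (hT : IsSmoothParamFamilyDiffeo T) :
    ∃ ρ : EuclideanSpace ℝ (Fin n) × EuclideanSpace ℝ (Fin p) → ℝ,
      ContDiff ℝ ∞ ρ ∧ (∀ z, 1 ≤ ρ z) ∧
      ∀ (x : EuclideanSpace ℝ (Fin n)) (θ : EuclideanSpace ℝ (Fin p)),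
        |h (x, θ)| ≤ ρ (x, θ) * ‖T (x, θ)‖ :=
  exists_smooth_bound_factor_diffeo_general h hsmooth h0 T hT

end
end

section
/- Let n, p be positive natural numbers and let T : ℝ^n × ℝ^p → ℝ^n be a smooth parameterized family of diffeomorphisms of ℝ^n. Then for every bounded set Θ ⊂ ℝ^p there exist class K∞ functions a, b : [0,∞) → [0,∞) such that a(|x|) ≤ |T(x,θ)| ≤ b(|x|) for all x ∈ ℝ^n and all θ ∈ Θ, where |·| denotes the Euclidean norm. -/
/-!
On the compact closure `K` of `Θ`, `M(r) = sup {‖T (x, θ)‖ : ‖x‖ ≤ r, θ ∈ K}` is continuous,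
nondecreasing and vanishes at `0`, so `r ↦ r + M r` is a `K∞` upper bound. The same bound `β` for
the inverse family `S` gives `‖x‖ = ‖S (T (x, θ), θ)‖ ≤ β ‖T (x, θ)‖`, and `β⁻¹` is the lower bound.
-/

open scoped ContDiff

noncomputable section

/-- A function `a : [0,∞) → [0,∞)` is of class `K∞` if it is continuous, strictly increasing,
vanishes at `0` and tends to infinity. -/
def IsClassKInf (a : ℝ → ℝ) : Prop :=
  ContinuousOn a (Set.Ici 0) ∧ StrictMonoOn a (Set.Ici 0) ∧ a 0 = 0 ∧
  (∀ s, 0 ≤ s → 0 ≤ a s) ∧ Filter.Tendsto a Filter.atTop Filter.atTop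

open Filter Metric Set

theorem OrderIso.isClassKInf (e : ℝ ≃o ℝ) (h0 : e 0 = 0) : IsClassKInf e :=
  ⟨e.continuous.continuousOn, e.strictMono.strictMonoOn _, h0,
    fun _ hs => h0 ▸ e.monotone hs, e.tendsto_atTop⟩

section SupNormOnBall

variable {E F G : Type*} [NormedAddCommGroup E] [NormedSpace ℝ E] [SeminormedAddCommGroup G]
  (T : E × F → G) (K : Set F)

/-- For `r ≥ 0`, the supremum of `‖T (x, θ)‖` over `‖x‖ ≤ r` and `θ ∈ K`. It is written over the
unit ball, with `x = r • u`, so that continuity in `r` is an instance of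
`IsCompact.continuous_sSup`. -/
def supNormOnBall (r : ℝ) : ℝ :=
  sSup ((fun q : E × F => ‖T (r • q.1, q.2)‖) '' (closedBall 0 1 ×ˢ K))

theorem supNormOnBall_nonneg (r : ℝ) : 0 ≤ supNormOnBall T K r :=
  Real.sSup_nonneg <| by
    rintro _ ⟨q, -, rfl⟩
    exact norm_nonneg _

theorem supNormOnBall_zero (h0 : ∀ θ ∈ K, T (0, θ) = 0) : supNormOnBall T K 0 = 0 := by
  refine le_antisymm (Real.sSup_nonpos ?_) (supNormOnBall_nonneg T K 0)
  rintro _ ⟨q, ⟨-, hq⟩, rfl⟩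
  simp [h0 q.2 hq]

variable [TopologicalSpace F] [ProperSpace E] {T K}

theorem bddAbove_supNormOnBall_image (hT : Continuous T) (hK : IsCompact K) (r : ℝ) :
    BddAbove ((fun q : E × F => ‖T (r • q.1, q.2)‖) '' (closedBall 0 1 ×ˢ K)) :=
  ((isCompact_closedBall 0 1).prod hK).bddAbove_image <| by fun_prop

theorem continuous_supNormOnBall (hT : Continuous T) (hK : IsCompact K) :
    Continuous (supNormOnBall T K) :=
  ((isCompact_closedBall (0 : E) 1).prod hK).continuous_sSup
    (f := fun (r : ℝ) (q : E × F) => ‖T (r • q.1, q.2)‖) (by fun_prop)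

theorem norm_le_supNormOnBall (hT : Continuous T) (hK : IsCompact K) {r : ℝ} (hr : 0 ≤ r)
    {x : E} (hx : ‖x‖ ≤ r) {θ : F} (hθ : θ ∈ K) : ‖T (x, θ)‖ ≤ supNormOnBall T K r := by
  rcases hr.eq_or_lt with rfl | hr
  · refine le_csSup (bddAbove_supNormOnBall_image hT hK 0) ⟨(0, θ), ⟨by simp, hθ⟩, ?_⟩
    simp [norm_le_zero_iff.1 hx]
  refine le_csSup (bddAbove_supNormOnBall_image hT hK r) ⟨(r⁻¹ • x, θ), ⟨?_, hθ⟩, ?_⟩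
  · simpa [norm_smul, abs_of_pos hr, inv_mul_le_one₀ hr] using hx
  · simp [smul_inv_smul₀ hr.ne']

theorem monotoneOn_supNormOnBall (hT : Continuous T) (hK : IsCompact K) :
    MonotoneOn (supNormOnBall T K) (Ici 0) := by
  intro r hr r' hr' hrr'
  refine Real.sSup_le ?_ (supNormOnBall_nonneg T K r')
  rintro _ ⟨q, ⟨hq, hθ⟩, rfl⟩
  refine norm_le_supNormOnBall hT hK hr' ?_ hθ
  rw [mem_closedBall_zero_iff] at hq
  calc ‖r • q.1‖ = r * ‖q.1‖ := by rw [norm_smul, Real.norm_of_nonneg hr]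
    _ ≤ r' * 1 := mul_le_mul hrr' hq (norm_nonneg _) hr'
    _ = r' := mul_one r'

end SupNormOnBall

theorem exists_orderIso_norm_le {E F G : Type*} [NormedAddCommGroup E] [NormedSpace ℝ E]
    [ProperSpace E] [TopologicalSpace F] [SeminormedAddCommGroup G] {T : E × F → G}
    (hT : Continuous T) {K : Set F} (hK : IsCompact K) (h0 : ∀ θ ∈ K, T (0, θ) = 0) :
    ∃ e : ℝ ≃o ℝ, e 0 = 0 ∧ ∀ x, ∀ θ ∈ K, ‖T (x, θ)‖ ≤ e ‖x‖ := by
  set M := supNormOnBall T K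
  set b : ℝ → ℝ := fun r => r + M (max r 0)
  have hb_cont : Continuous b := by
    have := continuous_supNormOnBall hT hK
    fun_prop
  have hb_mono : StrictMono b := fun r r' h =>
    add_lt_add_of_lt_of_le h <| monotoneOn_supNormOnBall hT hK (le_max_right r 0)
      (le_max_right r' 0) (max_le_max_right 0 h.le)
  have hb_top : Tendsto b atTop atTop :=
    tendsto_atTop_mono (fun r => le_add_of_nonneg_right (supNormOnBall_nonneg T K _)) tendsto_id
  have hb_bot : Tendsto b atBot atBot := by
    refine tendsto_id.congr' ?_
    filter_upwards [eventually_le_atBot 0] with r hr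
    simp [b, M, max_eq_right hr, supNormOnBall_zero T K h0]
  refine ⟨hb_mono.orderIsoOfSurjective b (hb_cont.surjective hb_top hb_bot), ?_, ?_⟩
  · simp [b, M, supNormOnBall_zero T K h0]
  · intro x θ hθ
    calc ‖T (x, θ)‖ ≤ M ‖x‖ := norm_le_supNormOnBall hT hK (norm_nonneg x) le_rfl hθ
      _ ≤ b ‖x‖ := by simp [b, M]

theorem smoothParamFamilyDiffeo_Kinf_bounds_general {n p : ℕ}
    (T : EuclideanSpace ℝ (Fin n) × EuclideanSpace ℝ (Fin p) → EuclideanSpace ℝ (Fin n))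
    (hT : IsSmoothParamFamilyDiffeo T)
    (Θ : Set (EuclideanSpace ℝ (Fin p))) (hΘ : Bornology.IsBounded Θ) :
    ∃ a b : ℝ → ℝ, IsClassKInf a ∧ IsClassKInf b ∧
      ∀ (x : EuclideanSpace ℝ (Fin n)) (θ : EuclideanSpace ℝ (Fin p)), θ ∈ Θ →
        a ‖x‖ ≤ ‖T (x, θ)‖ ∧ ‖T (x, θ)‖ ≤ b ‖x‖ := by
  obtain ⟨hT, hT0, S, hS, -, hST⟩ := hT
  have hS0 : ∀ θ, S (0, θ) = 0 := fun θ => by simpa [hT0 θ] using hST 0 θ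
  have hK := hΘ.isCompact_closure
  obtain ⟨eT, heT0, hTle⟩ := exists_orderIso_norm_le hT.continuous hK fun θ _ => hT0 θ
  obtain ⟨eS, heS0, hSle⟩ := exists_orderIso_norm_le hS.continuous hK fun θ _ => hS0 θ
  refine ⟨eS.symm, eT, eS.symm.isClassKInf (eS.symm_apply_eq.2 heS0.symm),
    eT.isClassKInf heT0, fun x θ hθ => ⟨?_, hTle x θ (subset_closure hθ)⟩⟩
  rw [eS.symm_apply_le, ← congrArg norm (hST x θ)]
  exact hSle _ θ (subset_closure hθ)

/-- For a smooth parameterized family of diffeomorphisms `T` and a bounded parameter set `Θ`,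
there are class `K∞` bounds `a(|x|) ≤ |T(x,θ)| ≤ b(|x|)` valid for all `x` and all `θ ∈ Θ`. -/
theorem smoothParamFamilyDiffeo_Kinf_bounds {n p : ℕ} (hn : 0 < n) (hp : 0 < p)
    (T : EuclideanSpace ℝ (Fin n) × EuclideanSpace ℝ (Fin p) → EuclideanSpace ℝ (Fin n))
    (hT : IsSmoothParamFamilyDiffeo T)
    (Θ : Set (EuclideanSpace ℝ (Fin p))) (hΘ : Bornology.IsBounded Θ) :
    ∃ a b : ℝ → ℝ, IsClassKInf a ∧ IsClassKInf b ∧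
      ∀ (x : EuclideanSpace ℝ (Fin n)) (θ : EuclideanSpace ℝ (Fin p)), θ ∈ Θ →
        a ‖x‖ ≤ ‖T (x, θ)‖ ∧ ‖T (x, θ)‖ ≤ b ‖x‖ :=
  smoothParamFamilyDiffeo_Kinf_bounds_general T hT Θ hΘ

end
end

section
/- (Theorem 1.) Consider the system ẋ = f(x) + g(x)u + g(x)⟨φ(x),θ⟩ on ℝ^n, where f, g : ℝ^n → ℝ^n and φ : ℝ^n → ℝ^p are locally Lipschitz with f(0) = 0 and φ(0) = 0, u ∈ ℝ is the control input and θ ∈ ℝ^p is a constant unknown parameter vector. Assume: (H1) there exist a C² function P : ℝ^n → [0,∞) and a continuous function Q : ℝ^n → [0,∞), both positive definite and radially unbounded, and a locally Lipschitz function k : ℝ^n → ℝ with k(0) = 0, such that ∇P(x)·f(x) + (∇P(x)·g(x))·k(x) ≤ −Q(x) for all x ∈ ℝ^n; (H2) there exists a locally Lipschitz function μ : ℝ^n → (0,∞) such that |φ(x)|² ≤ μ(x)·Q(x) for all x ∈ ℝ^n. Let ρ be a class K∞ function with ρ(P(x)) ≤ Q(x) for all x ∈ ℝ^n, let δ > 0,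 r ≥ 0, λ ∈ (0,1), and let Γ ∈ ℝ^{p×p} be a symmetric positive definite matrix. Consider the closed-loop system obtained with the adaptive feedback u = k(x) − ⟨φ(x),θ̂⟩ − (δ/2·|φ(x)|² + μ(x)·(r + |θ̂|²))·(∇P(x)·g(x)) and update law θ̂' = (∇P(x)·g(x))·Γφ(x). Then there exists a class KL function σ (depending only on ρ and λ) such that for every θ ∈ ℝ^p and every continuously differentiable solution (x(·), θ̂(·)) : [0,∞) → ℝ^n × ℝ^p of the closed-loop system, setting α = ρ^{-1}((1−λ)^{-1}·δ^{-1}·(|θ|² − r)^+), the estimate (P(x(t)) − α)^+ ≤ σ((P(x(0)) − α)^+, t) holds for all t ≥ 0. -/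
/-!
Along closed-loop trajectories the two damping terms absorb, by Young's inequality, both the
unknown term `⟨φ(x), θ⟩` and the certainty-equivalence term `⟨φ(x), θ̂⟩`, which gives
`d/dt P(x) ≤ -(λ/2) ρ(P(x))` whenever `P(x) ≥ α`. A function `V` with `V' ≤ -c ρ(V)` above `α`
never rises above `max (V 0) α`, and while `V - α > y` it decreases at rate at least `c ρ(y)`.
Hence `(V t - α)⁺ ≤ y` for the solution `y` of `y + c t ρ(y) = (V 0 - α)⁺`, and this `y`, as a
function of `(V 0 - α)⁺` and `t`, is of class KL.
-/

open scoped RealInnerProductSpace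

noncomputable section

/-- A continuous function `P : ℝⁿ → [0,∞)` is positive definite and radially unbounded. -/
def PosDefRadUnbounded {n : ℕ} (P : EuclideanSpace ℝ (Fin n) → ℝ) : Prop :=
  P 0 = 0 ∧ (∀ x, x ≠ 0 → 0 < P x) ∧ (∀ x, 0 ≤ P x) ∧
  Filter.Tendsto P (Bornology.cobounded (EuclideanSpace ℝ (Fin n))) Filter.atTop

namespace IsClassKInf

variable {ρ : ℝ → ℝ}

theorem apply_nonneg (hρ : IsClassKInf ρ) {s : ℝ} (hs : 0 ≤ s) : 0 ≤ ρ s := hρ.2.2.2.1 s hs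

theorem apply_le_apply (hρ : IsClassKInf ρ) {s s' : ℝ} (hs : 0 ≤ s) (h : s ≤ s') : ρ s ≤ ρ s' :=
  hρ.2.1.monotoneOn hs (hs.trans h) h

theorem apply_pos (hρ : IsClassKInf ρ) {s : ℝ} (hs : 0 < s) : 0 < ρ s := by
  simpa [hρ.2.2.1] using hρ.2.1 Set.self_mem_Ici hs.le hs

theorem monotone_comp_max_zero (hρ : IsClassKInf ρ) : Monotone fun y => ρ (max y 0) :=
  fun _ _ h => hρ.apply_le_apply (le_max_right _ _) (max_le_max_right 0 h)

theorem continuous_comp_max_zero (hρ : IsClassKInf ρ) : Continuous fun y => ρ (max y 0) :=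
  hρ.1.comp_continuous (continuous_id.max continuous_const) fun y => le_max_right y 0

end IsClassKInf

/-- `ρ` is extended by `ρ 0` to negative arguments, so that `y ↦ y + c t ρ(y)` becomes an
increasing bijection of all of `ℝ`. -/
def comparisonMap (ρ : ℝ → ℝ) (c t y : ℝ) : ℝ := y + c * t * ρ (max y 0)

/-- For `s ≥ 0`, the solution `y ≥ 0` of `y + c t ρ(y) = s`. -/
def comparisonKL (ρ : ℝ → ℝ) (c s t : ℝ) : ℝ := Function.invFun (comparisonMap ρ c t) s

section Comparison

variable {ρ : ℝ → ℝ} {c s t : ℝ}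

theorem comparisonMap.strictMono (hρ : IsClassKInf ρ) (hct : 0 ≤ c * t) :
    StrictMono (comparisonMap ρ c t) :=
  strictMono_id.add_monotone fun _ _ h =>
    mul_le_mul_of_nonneg_left (hρ.monotone_comp_max_zero h) hct

theorem comparisonMap.surjective (hρ : IsClassKInf ρ) (hct : 0 ≤ c * t) :
    Function.Surjective (comparisonMap ρ c t) := by
  refine Continuous.surjective ?_ ?_ ?_
  · exact continuous_id.add (continuous_const.mul hρ.continuous_comp_max_zero)
  · refine Filter.tendsto_atTop_mono (fun y => ?_) Filter.tendsto_id
    exact le_add_of_nonneg_right (mul_nonneg hct (hρ.apply_nonneg (le_max_right y 0)))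
  · refine Filter.tendsto_id.congr' ?_
    filter_upwards [Filter.eventually_le_atBot 0] with y hy
    simp [comparisonMap, max_eq_right hy, hρ.2.2.1]

theorem comparisonMap_comparisonKL (hρ : IsClassKInf ρ) (hct : 0 ≤ c * t) :
    comparisonMap ρ c t (comparisonKL ρ c s t) = s :=
  Function.invFun_eq (comparisonMap.surjective hρ hct s)

theorem comparisonKL_comparisonMap (hρ : IsClassKInf ρ) (hct : 0 ≤ c * t) (y : ℝ) :
    comparisonKL ρ c (comparisonMap ρ c t y) t = y :=
  Function.leftInverse_invFun (comparisonMap.strictMono hρ hct).injective y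

namespace comparisonKL

theorem strictMono (hρ : IsClassKInf ρ) (hct : 0 ≤ c * t) :
    StrictMono fun s => comparisonKL ρ c s t := by
  intro s₁ s₂ h
  rwa [← (comparisonMap.strictMono hρ hct).lt_iff_lt, comparisonMap_comparisonKL hρ hct,
    comparisonMap_comparisonKL hρ hct]

theorem continuous (hρ : IsClassKInf ρ) (hct : 0 ≤ c * t) :
    Continuous fun s => comparisonKL ρ c s t :=
  (strictMono hρ hct).monotone.continuous_of_surjective
    fun y => ⟨_, comparisonKL_comparisonMap hρ hct y⟩

theorem zero_left (hρ : IsClassKInf ρ) (hct : 0 ≤ c * t) : comparisonKL ρ c 0 t = 0 := by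
  simpa [comparisonMap, hρ.2.2.1] using comparisonKL_comparisonMap hρ hct 0

theorem nonneg (hρ : IsClassKInf ρ) (hct : 0 ≤ c * t) (hs : 0 ≤ s) :
    0 ≤ comparisonKL ρ c s t :=
  zero_left hρ hct ▸ (strictMono hρ hct).monotone hs

theorem add_mul_eq (hρ : IsClassKInf ρ) (hct : 0 ≤ c * t) (hs : 0 ≤ s) :
    comparisonKL ρ c s t + c * t * ρ (comparisonKL ρ c s t) = s := by
  simpa [comparisonMap, max_eq_left (nonneg hρ hct hs)] using
    comparisonMap_comparisonKL (s := s) hρ hct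

theorem antitoneOn (hρ : IsClassKInf ρ) (hc : 0 ≤ c) (hs : 0 ≤ s) :
    AntitoneOn (fun t => comparisonKL ρ c s t) (Set.Ici 0) := by
  intro t₁ ht₁ t₂ ht₂ h
  have hct₁ : 0 ≤ c * t₁ := mul_nonneg hc ht₁
  have hct₂ : 0 ≤ c * t₂ := mul_nonneg hc ht₂
  set y₂ := comparisonKL ρ c s t₂
  have hy₂ : 0 ≤ y₂ := nonneg hρ hct₂ hs
  have : comparisonMap ρ c t₁ y₂ ≤ comparisonMap ρ c t₁ (comparisonKL ρ c s t₁) := by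
    rw [comparisonMap_comparisonKL hρ hct₁, ← add_mul_eq hρ hct₂ hs, comparisonMap,
      max_eq_left hy₂]
    gcongr
    exact hρ.apply_nonneg hy₂
  exact (comparisonMap.strictMono hρ hct₁).le_iff_le.1 this

theorem tendsto_zero (hρ : IsClassKInf ρ) (hc : 0 < c) (hs : 0 ≤ s) :
    Filter.Tendsto (fun t => comparisonKL ρ c s t) Filter.atTop (nhds 0) := by
  rw [Metric.tendsto_atTop]
  intro ε hε
  have hρε : 0 < c * ρ (ε / 2) := mul_pos hc (hρ.apply_pos (half_pos hε))
  refine ⟨s / (c * ρ (ε / 2)) + 1, fun t ht => ?_⟩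
  have ht' : s < c * ρ (ε / 2) * t := by
    rw [← div_lt_iff₀' hρε]; linarith
  have hct : 0 ≤ c * t := mul_nonneg hc.le (by linarith [div_nonneg hs hρε.le])
  have hy := nonneg hρ hct hs (t := t)
  suffices comparisonKL ρ c s t ≤ ε / 2 by
    rw [Real.dist_eq, sub_zero, abs_of_nonneg hy]; linarith
  by_contra! hlt
  have := hρ.apply_le_apply (half_pos hε).le hlt.le
  have := add_mul_eq hρ hct hs
  nlinarith

end comparisonKL

theorem isClassKL_comparisonKL (hρ : IsClassKInf ρ) (hc : 0 < c) :
    IsClassKL (comparisonKL ρ c) :=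
  ⟨fun _ _ hs ht => comparisonKL.nonneg hρ (mul_nonneg hc.le ht) hs,
   fun _ ht => ⟨(comparisonKL.continuous hρ (mul_nonneg hc.le ht)).continuousOn,
     (comparisonKL.strictMono hρ (mul_nonneg hc.le ht)).strictMonoOn _,
     comparisonKL.zero_left hρ (mul_nonneg hc.le ht)⟩,
   fun _ hs => ⟨comparisonKL.antitoneOn hρ hc.le hs, comparisonKL.tendsto_zero hρ hc hs⟩⟩

end Comparison

section DifferentialInequality

variable {V V' : ℝ → ℝ} {a b α : ℝ}

theorem le_max_of_hasDerivAt_neg (hV : ∀ τ ∈ Set.Icc a b, HasDerivAt V (V' τ) τ)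
    (hneg : ∀ τ ∈ Set.Icc a b, α < V τ → V' τ < 0) :
    ∀ τ ∈ Set.Icc a b, V τ ≤ max (V a) α := by
  intro τ hτ
  refine le_of_forall_pos_le_add fun ε hε => ?_
  refine image_le_of_deriv_right_lt_deriv_boundary'
    (fun τ hτ => (hV τ hτ).continuousAt.continuousWithinAt)
    (fun τ hτ => (hV τ (Set.Ico_subset_Icc_self hτ)).hasDerivWithinAt)
    (by linarith [le_max_left (V a) α]) continuousOn_const
    (fun _ _ => hasDerivWithinAt_const _ _ _) (fun τ hτ hVτ => ?_) hτ
  exact hneg τ (Set.Ico_subset_Icc_self hτ) (by linarith [le_max_right (V a) α])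

theorem le_sub_mul_of_hasDerivAt_le {κ : ℝ} (hV : ∀ τ ∈ Set.Icc a b, HasDerivAt V (V' τ) τ)
    (hle : ∀ τ ∈ Set.Icc a b, V' τ ≤ -κ) : ∀ τ ∈ Set.Icc a b, V τ ≤ V a - κ * (τ - a) := by
  have hB : ∀ τ, HasDerivAt (fun τ => V a - κ * (τ - a)) (-κ) τ := fun τ => by
    simpa using ((hasDerivAt_id τ).sub_const a).const_mul κ |>.const_sub (V a)
  exact image_le_of_deriv_right_le_deriv_boundary
    (fun τ hτ => (hV τ hτ).continuousAt.continuousWithinAt)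
    (fun τ hτ => (hV τ (Set.Ico_subset_Icc_self hτ)).hasDerivWithinAt)
    (by simp) (by fun_prop)
    (fun τ _ => (hB τ).hasDerivWithinAt) (fun τ hτ => hle τ (Set.Ico_subset_Icc_self hτ))

theorem max_sub_le_comparisonKL {ρ : ℝ → ℝ} {c t : ℝ} (hρ : IsClassKInf ρ) (hc : 0 < c)
    (hα : 0 ≤ α) (hV : ∀ τ, 0 ≤ τ → HasDerivAt V (V' τ) τ)
    (hdecay : ∀ τ, 0 ≤ τ → α ≤ V τ → V' τ ≤ -(c * ρ (V τ))) (ht : 0 ≤ t) :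
    max (V t - α) 0 ≤ comparisonKL ρ c (max (V 0 - α) 0) t := by
  have hct : 0 ≤ c * t := mul_nonneg hc.le ht
  set s := max (V 0 - α) 0
  set y := comparisonKL ρ c s t
  have hy : 0 ≤ y := comparisonKL.nonneg hρ hct (le_max_right _ _)
  refine max_le (not_lt.1 fun hyt => ?_) hy
  have hVon : ∀ {a}, 0 ≤ a → ∀ τ ∈ Set.Icc a t, HasDerivAt V (V' τ) τ :=
    fun ha τ hτ => hV τ (ha.trans hτ.1)
  have hstays : ∀ τ ∈ Set.Icc 0 t, α + y < V τ := by
    intro τ hτ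
    have := le_max_of_hasDerivAt_neg (hVon hτ.1) (fun u hu hαu => (hdecay u (hτ.1.trans hu.1)
      hαu.le).trans_lt (neg_lt_zero.2 (mul_pos hc (hρ.apply_pos (hα.trans_lt hαu))))) t
      (Set.right_mem_Icc.2 hτ.2)
    rcases max_cases (V τ) α with ⟨h, -⟩ | ⟨h, -⟩ <;> linarith
  have hdrop := le_sub_mul_of_hasDerivAt_le (hVon le_rfl) (κ := c * ρ y) (fun τ hτ => by
    have hyτ : y ≤ V τ := by linarith [hstays τ hτ]
    linarith [hdecay τ hτ.1 (by linarith [hstays τ hτ]),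
      mul_le_mul_of_nonneg_left (hρ.apply_le_apply hy hyτ) hc.le]) t (Set.right_mem_Icc.2 ht)
  have := comparisonKL.add_mul_eq hρ hct (le_max_right (V 0 - α) 0)
  linarith [le_max_left (V 0 - α) 0]

end DifferentialInequality

theorem norm_le_sqrt_add_sqrt {F : Type*} [NormedAddCommGroup F] {θ : F} {r : ℝ} (hr : 0 ≤ r) :
    ‖θ‖ ≤ √(max (‖θ‖ ^ 2 - r) 0) + √r := by
  refine (pow_le_pow_iff_left₀ (norm_nonneg θ) (by positivity) two_ne_zero).1 ?_
  have hT := Real.sq_sqrt (le_max_right (‖θ‖ ^ 2 - r) 0)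
  have hr' := Real.sq_sqrt hr
  nlinarith [le_max_left (‖θ‖ ^ 2 - r) 0, Real.sqrt_nonneg r,
    Real.sqrt_nonneg (max (‖θ‖ ^ 2 - r) 0)]

theorem inner_closedLoop_le {E F : Type*} [NormedAddCommGroup E] [InnerProductSpace ℝ E]
    [NormedAddCommGroup F] [InnerProductSpace ℝ F] {G f g : E} {φ θ θh : F}
    {k μ Q ρP δ r lam : ℝ} (hkQ : ⟪G, f⟫ + ⟪G, g⟫ * k ≤ -Q) (hμ : 0 < μ)
    (hμQ : ‖φ‖ ^ 2 ≤ μ * Q) (hρQ : ρP ≤ Q) (hδ : 0 < δ) (hr : 0 ≤ r)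
    (hθ : max (‖θ‖ ^ 2 - r) 0 ≤ (1 - lam) * δ * ρP) :
    ⟪G, f + ((k - ⟪φ, θh⟫ - (δ / 2 * ‖φ‖ ^ 2 + μ * (r + ‖θh‖ ^ 2)) * ⟪G, g⟫) + ⟪φ, θ⟫) • g⟫
      ≤ -(lam / 2 * ρP) := by
  set A := ⟪G, g⟫
  set T := max (‖θ‖ ^ 2 - r) 0
  have hφ2 : (2 * μ)⁻¹ * ‖φ‖ ^ 2 ≤ Q / 2 := by
    rw [inv_mul_le_iff₀ (by positivity)]; linarith
  have hT : δ⁻¹ * √T ^ 2 ≤ (1 - lam) * ρP := by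
    rw [Real.sq_sqrt (le_max_right _ _), inv_mul_le_iff₀ hδ]; linarith
  -- Young's inequality, with `‖θ‖ ≤ √T + √r`: the `δ`-damping absorbs the `√T` part of `θ` at
  -- cost `(1 - λ) ρP / 2`, the `μ`-damping absorbs the `√r` part and `θ̂` at cost `Q / 2`.
  have hθT := two_mul_le_add_mul_sq (a := |A| * ‖φ‖) (b := √T) hδ
  have hθr := two_mul_le_add_mul_sq (a := |A| * √r) (b := ‖φ‖) (by positivity : 0 < 2 * μ)
  have hθh := two_mul_le_add_mul_sq (a := |A| * ‖θh‖) (b := ‖φ‖) (by positivity : 0 < 2 * μ)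
  have hθ' : A * ⟪φ, θ⟫ ≤ |A| * ‖φ‖ * (√T + √r) :=
    calc A * ⟪φ, θ⟫ ≤ |A| * (‖φ‖ * ‖θ‖) :=
          (le_abs_self _).trans ((abs_mul A _).trans_le
            (mul_le_mul_of_nonneg_left (abs_real_inner_le_norm φ θ) (abs_nonneg A)))
      _ ≤ |A| * ‖φ‖ * (√T + √r) := by
          rw [← mul_assoc]; gcongr; exact norm_le_sqrt_add_sqrt hr
  have hθh' : -(A * ⟪φ, θh⟫) ≤ |A| * ‖θh‖ * ‖φ‖ :=
    (neg_le_abs _).trans ((abs_mul A _).trans_le (by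
      rw [mul_assoc, mul_comm ‖θh‖]
      exact mul_le_mul_of_nonneg_left (abs_real_inner_le_norm φ θh) (abs_nonneg A)))
  rw [mul_pow, sq_abs] at hθT hθh
  rw [mul_pow, sq_abs, Real.sq_sqrt hr] at hθr
  have hexpand : ⟪G, f + ((k - ⟪φ, θh⟫ - (δ / 2 * ‖φ‖ ^ 2 + μ * (r + ‖θh‖ ^ 2)) * A)
      + ⟪φ, θ⟫) • g⟫ = (⟪G, f⟫ + A * k) + A * ⟪φ, θ⟫ - A * ⟪φ, θh⟫
        - (δ / 2 * ‖φ‖ ^ 2 + μ * (r + ‖θh‖ ^ 2)) * A ^ 2 := by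
    rw [inner_add_right, real_inner_smul_right]; ring
  rw [hexpand]
  linarith

theorem DifferentiableAt.hasDerivAt_comp_inner_gradient {E : Type*} [NormedAddCommGroup E]
    [InnerProductSpace ℝ E] [CompleteSpace E] {P : E → ℝ} {x : ℝ → E} {v : E} {t : ℝ}
    (hP : DifferentiableAt ℝ P (x t)) (hx : HasDerivAt x v t) :
    HasDerivAt (fun τ => P (x τ)) ⟪gradient P (x t), v⟫ t := by
  simpa [Function.comp_def, inner_gradient_left] using hP.hasFDerivAt.comp_hasDerivAt t hx

theorem theorem1_general {n p : ℕ}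
    (f g : EuclideanSpace ℝ (Fin n) → EuclideanSpace ℝ (Fin n))
    (φ : EuclideanSpace ℝ (Fin n) → EuclideanSpace ℝ (Fin p))
    (P Q : EuclideanSpace ℝ (Fin n) → ℝ)
    (hP : ContDiff ℝ 2 P)
    (k : EuclideanSpace ℝ (Fin n) → ℝ)
    (hkQ : ∀ x, ⟪gradient P x, f x⟫ + ⟪gradient P x, g x⟫ * k x ≤ -Q x)
    (μ : EuclideanSpace ℝ (Fin n) → ℝ) (hμpos : ∀ x, 0 < μ x)
    (hμQ : ∀ x, ‖φ x‖ ^ 2 ≤ μ x * Q x)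
    (ρ : ℝ → ℝ) (hρ : IsClassKInf ρ) (hρPQ : ∀ x, ρ (P x) ≤ Q x)
    (δ : ℝ) (hδ : 0 < δ) (r : ℝ) (hr : 0 ≤ r) (lam : ℝ) (hlam : lam ∈ Set.Ioo (0 : ℝ) 1)
    (Γ : Matrix (Fin p) (Fin p) ℝ) :
    ∃ σ : ℝ → ℝ → ℝ, IsClassKL σ ∧
      ∀ (θ : EuclideanSpace ℝ (Fin p))
        (x : ℝ → EuclideanSpace ℝ (Fin n)) (θh : ℝ → EuclideanSpace ℝ (Fin p)),
        (∀ t, 0 ≤ t →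
          HasDerivAt x (f (x t) +
            ((k (x t) - ⟪φ (x t), θh t⟫ -
                (δ / 2 * ‖φ (x t)‖ ^ 2 + μ (x t) * (r + ‖θh t‖ ^ 2)) *
                  ⟪gradient P (x t), g (x t)⟫)
              + ⟪φ (x t), θ⟫) • g (x t)) t) →
        (∀ t, 0 ≤ t →
          HasDerivAt θh (⟪gradient P (x t), g (x t)⟫ •
            (WithLp.toLp 2 (Γ.mulVec (fun j => φ (x t) j)) : EuclideanSpace ℝ (Fin p))) t) →
        ∀ α : ℝ, 0 ≤ α → ρ α = (1 - lam)⁻¹ * δ⁻¹ * max (‖θ‖ ^ 2 - r) 0 →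
        ∀ t, 0 ≤ t → max (P (x t) - α) 0 ≤ σ (max (P (x 0) - α) 0) t := by
  obtain ⟨hlam₀, hlam₁⟩ := hlam
  refine ⟨comparisonKL ρ (lam / 2), isClassKL_comparisonKL hρ (half_pos hlam₀), ?_⟩
  intro θ x θh hx _ α hα hρα t ht
  refine max_sub_le_comparisonKL hρ (half_pos hlam₀) hα (fun τ hτ =>
    ((hP.differentiable two_ne_zero).differentiableAt).hasDerivAt_comp_inner_gradient (hx τ hτ))
    (fun τ _ hαP => ?_) ht
  refine (inner_closedLoop_le (lam := lam) (hkQ _) (hμpos _) (hμQ _) (hρPQ _) hδ hr ?_).trans_eq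
    (by ring)
  have hscale : 0 < (1 - lam) * δ := mul_pos (sub_pos.2 hlam₁) hδ
  calc max (‖θ‖ ^ 2 - r) 0 = (1 - lam) * δ * ρ α := by
        rw [hρα]; field_simp [hscale.ne', (sub_pos.2 hlam₁).ne']
    _ ≤ (1 - lam) * δ * ρ (P (x τ)) := by gcongr; exact hρ.apply_le_apply hα hαP

/-- Theorem 1: for the matched-uncertainty system `ẋ = f(x) + g(x)u + g(x)⟨φ(x),θ⟩` with the
modified adaptive controller (nonlinear damping depending on both `x` and `θ̂`), a global KL
estimate holds for `(P(x(t)) − α)⁺` where `α = ρ⁻¹((1−λ)⁻¹ δ⁻¹ (|θ|² − r)⁺)`. -/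
theorem theorem1 {n p : ℕ} (hn : 0 < n) (hp : 0 < p)
    (f g : EuclideanSpace ℝ (Fin n) → EuclideanSpace ℝ (Fin n))
    (φ : EuclideanSpace ℝ (Fin n) → EuclideanSpace ℝ (Fin p))
    (hf : LocallyLipschitz f) (hg : LocallyLipschitz g) (hφ : LocallyLipschitz φ)
    (hf0 : f 0 = 0) (hφ0 : φ 0 = 0)
    (P Q : EuclideanSpace ℝ (Fin n) → ℝ)
    (hP : ContDiff ℝ 2 P) (hPpos : PosDefRadUnbounded P)
    (hQc : Continuous Q) (hQpos : PosDefRadUnbounded Q)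
    (k : EuclideanSpace ℝ (Fin n) → ℝ) (hk : LocallyLipschitz k) (hk0 : k 0 = 0)
    (hkQ : ∀ x, ⟪gradient P x, f x⟫ + ⟪gradient P x, g x⟫ * k x ≤ -Q x)
    (μ : EuclideanSpace ℝ (Fin n) → ℝ) (hμ : LocallyLipschitz μ) (hμpos : ∀ x, 0 < μ x)
    (hμQ : ∀ x, ‖φ x‖ ^ 2 ≤ μ x * Q x)
    (ρ : ℝ → ℝ) (hρ : IsClassKInf ρ) (hρPQ : ∀ x, ρ (P x) ≤ Q x)
    (δ : ℝ) (hδ : 0 < δ) (r : ℝ) (hr : 0 ≤ r) (lam : ℝ) (hlam : lam ∈ Set.Ioo (0 : ℝ) 1)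
    (Γ : Matrix (Fin p) (Fin p) ℝ) (hΓ : Γ.PosDef) :
    ∃ σ : ℝ → ℝ → ℝ, IsClassKL σ ∧
      ∀ (θ : EuclideanSpace ℝ (Fin p))
        (x : ℝ → EuclideanSpace ℝ (Fin n)) (θh : ℝ → EuclideanSpace ℝ (Fin p)),
        (∀ t, 0 ≤ t →
          HasDerivAt x (f (x t) +
            ((k (x t) - ⟪φ (x t), θh t⟫ -
                (δ / 2 * ‖φ (x t)‖ ^ 2 + μ (x t) * (r + ‖θh t‖ ^ 2)) *
                  ⟪gradient P (x t), g (x t)⟫)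
              + ⟪φ (x t), θ⟫) • g (x t)) t) →
        (∀ t, 0 ≤ t →
          HasDerivAt θh (⟪gradient P (x t), g (x t)⟫ •
            (WithLp.toLp 2 (Γ.mulVec (fun j => φ (x t) j)) : EuclideanSpace ℝ (Fin p))) t) →
        ∀ α : ℝ, 0 ≤ α → ρ α = (1 - lam)⁻¹ * δ⁻¹ * max (‖θ‖ ^ 2 - r) 0 →
        ∀ t, 0 ≤ t → max (P (x t) - α) 0 ≤ σ (max (P (x 0) - α) 0) t :=
  theorem1_general f g φ P Q hP k hkQ μ hμpos hμQ ρ hρ hρPQ δ hδ r hr lam hlam Γ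

end
end

section
/- Let f, g : ℝ^n → ℝ^n and φ : ℝ^n → ℝ^p be locally Lipschitz with f(0) = 0 and φ(0) = 0, let P : ℝ^n → [0,∞) be a C¹ positive definite and radially unbounded function, let Q : ℝ^n → [0,∞) be continuous, positive definite and radially unbounded, let k : ℝ^n → ℝ satisfy k(0) = 0 and ∇P(x)·f(x) + (∇P(x)·g(x))·k(x) ≤ −Q(x) for all x, let μ : ℝ^n → (0,∞) satisfy |φ(x)|² ≤ μ(x)·Q(x) for all x, and let ρ be a class K∞ function with ρ(P(x)) ≤ Q(x) for all x. Then for every δ > 0 and r ≥ 0 and for all x ∈ ℝ^n and θ̂, θ ∈ ℝ^p, the following pointwise inequality holds: ∇P(x)·f(x) + (∇P(x)·g(x))·( k(x) − ⟨φ(x),θ̂⟩ − (δ/2·|φ(x)|² + μ(x)·(r + |θ̂|²))·(∇P(x)·g(x)) + ⟨φ(x),θ⟩ ) ≤ −½·ρ(P(x)) + (1/(2δ))·(|θ|² − r)^+. -/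
/-! With `A = ∇P·g`, the parameter mismatch term `A⟨φ, θ - θ̂⟩` is at most `|A| |φ| (|θ| + |θ̂|)`.
Splitting `|θ| ≤ √((|θ|² - r)⁺) + √r`, each of the three resulting cross terms is absorbed by
one of the damping terms `δ/2 |φ|² A²`, `μ r A²`, `μ |θ̂|² A²` through Young's inequality
`ab - m a² ≤ b²/(4m)`, leaving `(|θ|² - r)⁺/(2δ) + |φ|²/(2μ)`. The nominal controller gives
`-Q`, and `|φ|²/(2μ) ≤ Q/2` together with `ρ(P) ≤ Q` leaves `-ρ(P)/2`. -/

open scoped RealInnerProductSpace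

noncomputable section

lemma mul_sub_mul_sq_le_sq_div {m : ℝ} (hm : 0 < m) (a b : ℝ) :
    a * b - m * a ^ 2 ≤ b ^ 2 / (4 * m) := by
  rw [le_div_iff₀ (by positivity)]
  nlinarith [sq_nonneg (2 * m * a - b)]

lemma le_sqrt_posPart_sub_add_sqrt (b : ℝ) {r : ℝ} (hr : 0 ≤ r) :
    b ≤ √(max (b ^ 2 - r) 0) + √r := by
  have hs := Real.sq_sqrt (le_max_right (b ^ 2 - r) 0)
  have ht := Real.sq_sqrt hr
  refine (le_abs_self b).trans (abs_le_of_sq_le_sq ?_ (by positivity))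
  nlinarith [le_max_left (b ^ 2 - r) 0, Real.sqrt_nonneg (max (b ^ 2 - r) 0), Real.sqrt_nonneg r]

lemma mul_inner_sub_inner_le {E : Type*} [NormedAddCommGroup E] [InnerProductSpace ℝ E]
    (a : ℝ) (v w w' : E) : a * (⟪v, w⟫ - ⟪v, w'⟫) ≤ |a| * ‖v‖ * (‖w‖ + ‖w'‖) :=
  calc a * (⟪v, w⟫ - ⟪v, w'⟫) = a * ⟪v, w - w'⟫ := by rw [inner_sub_right]
    _ ≤ |a * ⟪v, w - w'⟫| := le_abs_self _
    _ = |a| * |⟪v, w - w'⟫| := abs_mul _ _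
    _ ≤ |a| * (‖v‖ * ‖w - w'‖) := by gcongr; exact abs_real_inner_le_norm v _
    _ ≤ |a| * ‖v‖ * (‖w‖ + ‖w'‖) := by rw [mul_assoc]; gcongr; exact norm_sub_le w w'

lemma mul_add_sub_damping_le {a c b h r δ m : ℝ} (ha : 0 ≤ a) (hc : 0 ≤ c) (hr : 0 ≤ r)
    (hδ : 0 < δ) (hm : 0 < m) :
    a * c * (b + h) - (δ / 2 * c ^ 2 + m * (r + h ^ 2)) * a ^ 2
      ≤ max (b ^ 2 - r) 0 / (2 * δ) + c ^ 2 / (2 * m) := by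
  set s := √(max (b ^ 2 - r) 0)
  set t := √r
  have hb : a * c * b ≤ a * c * (s + t) :=
    mul_le_mul_of_nonneg_left (le_sqrt_posPart_sub_add_sqrt b hr) (by positivity)
  have hs : (a * c) * s - δ / 2 * (a * c) ^ 2 ≤ s ^ 2 / (4 * (δ / 2)) :=
    mul_sub_mul_sq_le_sq_div (by positivity) _ _
  have ht : (a * t) * c - m * (a * t) ^ 2 ≤ c ^ 2 / (4 * m) :=
    mul_sub_mul_sq_le_sq_div hm _ _
  have hh : (a * h) * c - m * (a * h) ^ 2 ≤ c ^ 2 / (4 * m) :=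
    mul_sub_mul_sq_le_sq_div hm _ _
  have hs2 : s ^ 2 = max (b ^ 2 - r) 0 := Real.sq_sqrt (le_max_right _ _)
  have ht2 : (a * t) ^ 2 = a ^ 2 * r := by rw [mul_pow, Real.sq_sqrt hr]
  rw [hs2] at hs
  rw [ht2] at ht
  have e1 : max (b ^ 2 - r) 0 / (4 * (δ / 2)) = max (b ^ 2 - r) 0 / (2 * δ) := by ring
  have e2 : c ^ 2 / (2 * m) = c ^ 2 / (4 * m) + c ^ 2 / (4 * m) := by ring
  linarith

theorem lyapunov_decay_inequality_general {n p : ℕ}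
    (f g : EuclideanSpace ℝ (Fin n) → EuclideanSpace ℝ (Fin n))
    (φ : EuclideanSpace ℝ (Fin n) → EuclideanSpace ℝ (Fin p))
    (P : EuclideanSpace ℝ (Fin n) → ℝ)
    (Q : EuclideanSpace ℝ (Fin n) → ℝ)
    (k : EuclideanSpace ℝ (Fin n) → ℝ)
    (hkQ : ∀ x, ⟪gradient P x, f x⟫ + ⟪gradient P x, g x⟫ * k x ≤ -Q x)
    (μ : EuclideanSpace ℝ (Fin n) → ℝ) (hμpos : ∀ x, 0 < μ x)
    (hμQ : ∀ x, ‖φ x‖ ^ 2 ≤ μ x * Q x)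
    (ρ : ℝ → ℝ) (hρPQ : ∀ x, ρ (P x) ≤ Q x) :
    ∀ (δ : ℝ), 0 < δ → ∀ (r : ℝ), 0 ≤ r →
      ∀ (x : EuclideanSpace ℝ (Fin n)) (θh θ : EuclideanSpace ℝ (Fin p)),
        ⟪gradient P x, f x⟫ + ⟪gradient P x, g x⟫ *
            (k x - ⟪φ x, θh⟫ -
              (δ / 2 * ‖φ x‖ ^ 2 + μ x * (r + ‖θh‖ ^ 2)) * ⟪gradient P x, g x⟫
              + ⟪φ x, θ⟫)
          ≤ -(1 / 2) * ρ (P x) + (1 / (2 * δ)) * max (‖θ‖ ^ 2 - r) 0 := by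
  intro δ hδ r hr x θh θ
  set A := ⟪gradient P x, g x⟫
  calc ⟪gradient P x, f x⟫ + A * (k x - ⟪φ x, θh⟫ -
          (δ / 2 * ‖φ x‖ ^ 2 + μ x * (r + ‖θh‖ ^ 2)) * A + ⟪φ x, θ⟫)
        = (⟪gradient P x, f x⟫ + A * k x) + (A * (⟪φ x, θ⟫ - ⟪φ x, θh⟫)
          - (δ / 2 * ‖φ x‖ ^ 2 + μ x * (r + ‖θh‖ ^ 2)) * |A| ^ 2) := by
        rw [sq_abs]; ring
    _ ≤ -Q x + (|A| * ‖φ x‖ * (‖θ‖ + ‖θh‖)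
          - (δ / 2 * ‖φ x‖ ^ 2 + μ x * (r + ‖θh‖ ^ 2)) * |A| ^ 2) := by
        gcongr ?_ + (?_ - _)
        · exact hkQ x
        · exact mul_inner_sub_inner_le A (φ x) θ θh
    _ ≤ -Q x + (max (‖θ‖ ^ 2 - r) 0 / (2 * δ) + ‖φ x‖ ^ 2 / (2 * μ x)) := by
        gcongr
        exact mul_add_sub_damping_le (abs_nonneg A) (norm_nonneg _) hr hδ (hμpos x)
    _ ≤ -(1 / 2) * ρ (P x) + (1 / (2 * δ)) * max (‖θ‖ ^ 2 - r) 0 := by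
        have hφQ : ‖φ x‖ ^ 2 / (2 * μ x) ≤ Q x / 2 := by
          rw [div_le_iff₀ (by linarith [hμpos x])]
          linarith [hμQ x]
        rw [one_div_mul_eq_div]
        linarith [hρPQ x]

/-- The key pointwise Lyapunov inequality for the modified adaptive controller of Theorem 1. -/
theorem lyapunov_decay_inequality {n p : ℕ}
    (f g : EuclideanSpace ℝ (Fin n) → EuclideanSpace ℝ (Fin n))
    (φ : EuclideanSpace ℝ (Fin n) → EuclideanSpace ℝ (Fin p))
    (hf : LocallyLipschitz f) (hg : LocallyLipschitz g) (hφ : LocallyLipschitz φ)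
    (hf0 : f 0 = 0) (hφ0 : φ 0 = 0)
    (P : EuclideanSpace ℝ (Fin n) → ℝ) (hP : ContDiff ℝ 1 P) (hPpos : PosDefRadUnbounded P)
    (Q : EuclideanSpace ℝ (Fin n) → ℝ) (hQc : Continuous Q) (hQpos : PosDefRadUnbounded Q)
    (k : EuclideanSpace ℝ (Fin n) → ℝ) (hk0 : k 0 = 0)
    (hkQ : ∀ x, ⟪gradient P x, f x⟫ + ⟪gradient P x, g x⟫ * k x ≤ -Q x)
    (μ : EuclideanSpace ℝ (Fin n) → ℝ) (hμpos : ∀ x, 0 < μ x)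
    (hμQ : ∀ x, ‖φ x‖ ^ 2 ≤ μ x * Q x)
    (ρ : ℝ → ℝ) (hρ : IsClassKInf ρ) (hρPQ : ∀ x, ρ (P x) ≤ Q x) :
    ∀ (δ : ℝ), 0 < δ → ∀ (r : ℝ), 0 ≤ r →
      ∀ (x : EuclideanSpace ℝ (Fin n)) (θh θ : EuclideanSpace ℝ (Fin p)),
        ⟪gradient P x, f x⟫ + ⟪gradient P x, g x⟫ *
            (k x - ⟪φ x, θh⟫ -
              (δ / 2 * ‖φ x‖ ^ 2 + μ x * (r + ‖θh‖ ^ 2)) * ⟪gradient P x, g x⟫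
              + ⟪φ x, θ⟫)
          ≤ -(1 / 2) * ρ (P x) + (1 / (2 * δ)) * max (‖θ‖ ^ 2 - r) 0 :=
  lyapunov_decay_inequality_general f g φ P Q k hkQ μ hμpos hμQ ρ hρPQ

end
end

section
/- Let ρ be a class K∞ function, let λ ∈ (0,1) and α ≥ 0, and let p : [0,∞) → [0,∞) be a differentiable function satisfying p'(t) ≤ −½·ρ(p(t)) + ((1−λ)/2)·ρ(α) for all t ≥ 0. Then the function W(t) := ½·((p(t) − α)^+)² is differentiable on [0,∞) and satisfies W'(t) ≤ −ρ̃(W(t)) for all t ≥ 0, where ρ̃(s) := λ·√(s/2)·ρ(√(2s)) is a class K∞ function. -/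
noncomputable section

/-!
`W = g (p - α)` with `g x = ½ (x⁺)²`, and `g` is differentiable with `g' x = x⁺`: its Taylor
remainder is at most `½ (y - x)²` because `x ↦ x⁺` is 1-Lipschitz. Hence `W' = (p - α)⁺ p'`.
Where `p > α`, monotonicity of `ρ` gives `ρ α ≤ ρ p` and `ρ (p - α) ≤ ρ p`, so
`(p - α) p' ≤ -(λ/2) (p - α) ρ p ≤ -(λ/2) (p - α) ρ (p - α)`, and this is `-ρ̃ W` since
`√(W/2) = (p - α)/2` and `√(2W) = p - α`. That `ρ̃` is of class `K∞` follows from closure of the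
class under positive multiples, products and composition.
-/

open Set Filter Asymptotics

theorem abs_half_sq_max_zero_sub_sub_le (x y : ℝ) :
    |1 / 2 * max y 0 ^ 2 - 1 / 2 * max x 0 ^ 2 - (y - x) * max x 0| ≤ 1 / 2 * (y - x) ^ 2 := by
  rcases le_total 0 x with hx | hx <;> rcases le_total 0 y with hy | hy <;>
    simp only [max_eq_left, max_eq_right, hx, hy] <;>
    rw [abs_le] <;> constructor <;> nlinarith

theorem hasDerivAt_half_sq_max_zero (x : ℝ) :
    HasDerivAt (fun y => 1 / 2 * max y 0 ^ 2) (max x 0) x := by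
  refine .of_isLittleO (IsBigO.trans_isLittleO (g := fun y => ‖y - x‖ ^ 2) ?_
    (isLittleO_pow_sub_sub x one_lt_two))
  refine .of_bound 1 (Eventually.of_forall fun y => ?_)
  simpa [Real.norm_eq_abs, sq_abs] using
    (abs_half_sq_max_zero_sub_sub_le x y).trans (by nlinarith [sq_nonneg (y - x)])

theorem isClassKInf_id : IsClassKInf id :=
  ⟨continuousOn_id, strictMonoOn_id, rfl, fun _ hs => hs, tendsto_id⟩

theorem isClassKInf_sqrt : IsClassKInf Real.sqrt :=
  ⟨Real.continuous_sqrt.continuousOn, fun _ hs _ _ hst => Real.sqrt_lt_sqrt hs hst,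
    Real.sqrt_zero, fun _ _ => Real.sqrt_nonneg _, Real.tendsto_sqrt_atTop⟩

namespace IsClassKInf

variable {a b : ℝ → ℝ}

theorem const_mul (ha : IsClassKInf a) {c : ℝ} (hc : 0 < c) : IsClassKInf fun s => c * a s := by
  obtain ⟨hac, ham, ha0, hann, hat⟩ := ha
  exact ⟨continuousOn_const.mul hac,
    fun _ hs _ ht hst => mul_lt_mul_of_pos_left (ham hs ht hst) hc,
    by simp [ha0], fun s hs => mul_nonneg hc.le (hann s hs), hat.const_mul_atTop hc⟩

theorem comp (ha : IsClassKInf a) (hb : IsClassKInf b) : IsClassKInf fun s => a (b s) := by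
  obtain ⟨hac, ham, ha0, hann, hat⟩ := ha
  obtain ⟨hbc, hbm, hb0, hbnn, hbt⟩ := hb
  exact ⟨hac.comp hbc hbnn, fun _ hs _ ht hst => ham (hbnn _ hs) (hbnn _ ht) (hbm hs ht hst),
    by simp [hb0, ha0], fun s hs => hann _ (hbnn s hs), hat.comp hbt⟩

theorem mul (ha : IsClassKInf a) (hb : IsClassKInf b) : IsClassKInf fun s => a s * b s := by
  obtain ⟨hac, ham, ha0, hann, hat⟩ := ha
  obtain ⟨hbc, hbm, hb0, hbnn, hbt⟩ := hb
  exact ⟨hac.mul hbc,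
    fun s hs t ht hst => mul_lt_mul'' (ham hs ht hst) (hbm hs ht hst) (hann s hs) (hbnn s hs),
    by simp [ha0], fun s hs => mul_nonneg (hann s hs) (hbnn s hs), hat.atTop_mul_atTop₀ hbt⟩

end IsClassKInf

theorem max_sub_zero_mul_le_of_le {ρ : ℝ → ℝ} (hρ : MonotoneOn ρ (Ici 0)) (hρ0 : ρ 0 = 0)
    {lam α q v : ℝ} (hlam0 : 0 ≤ lam) (hlam1 : lam ≤ 1) (hα : 0 ≤ α) (hq : 0 ≤ q)
    (hv : v ≤ -(1 / 2) * ρ q + ((1 - lam) / 2) * ρ α) :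
    max (q - α) 0 * v ≤ -(lam * (max (q - α) 0 / 2) * ρ (max (q - α) 0)) := by
  rcases le_or_gt (q - α) 0 with hle | hlt
  · simp [max_eq_right hle, hρ0]
  rw [max_eq_left hlt.le]
  have hρα : ρ α ≤ ρ q := hρ hα hq (by linarith)
  have hρx : ρ (q - α) ≤ ρ q := hρ hlt.le hq (by linarith)
  calc (q - α) * v ≤ (q - α) * (-(1 / 2) * ρ q + ((1 - lam) / 2) * ρ q) := by
        gcongr; nlinarith
    _ = -(lam * ((q - α) / 2) * ρ q) := by ring
    _ ≤ -(lam * ((q - α) / 2) * ρ (q - α)) := by gcongr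

/-- Comparison step in the proof of Theorem 1: if `p' ≤ −½ρ(p) + ((1−λ)/2)ρ(α)`, then
`W = ½((p−α)⁺)²` is differentiable and satisfies `W' ≤ −ρ̃(W)` for the class `K∞` function
`ρ̃(s) = λ√(s/2)·ρ(√(2s))`. -/
theorem comparison_W_decay (ρ : ℝ → ℝ) (hρ : IsClassKInf ρ)
    (lam : ℝ) (hlam : lam ∈ Set.Ioo (0 : ℝ) 1) (α : ℝ) (hα : 0 ≤ α)
    (p p' : ℝ → ℝ) (hpnn : ∀ t, 0 ≤ t → 0 ≤ p t)
    (hp : ∀ t, 0 ≤ t → HasDerivAt p (p' t) t)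
    (hp' : ∀ t, 0 ≤ t → p' t ≤ -(1 / 2) * ρ (p t) + ((1 - lam) / 2) * ρ α) :
    (∀ t, 0 ≤ t →
      DifferentiableAt ℝ (fun s => (1 / 2) * (max (p s - α) 0) ^ 2) t ∧
      deriv (fun s => (1 / 2) * (max (p s - α) 0) ^ 2) t ≤
        -(lam * Real.sqrt (((1 / 2) * (max (p t - α) 0) ^ 2) / 2) *
          ρ (Real.sqrt (2 * ((1 / 2) * (max (p t - α) 0) ^ 2))))) ∧
    IsClassKInf (fun s => lam * Real.sqrt (s / 2) * ρ (Real.sqrt (2 * s))) := by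
  refine ⟨fun t ht => ?_, ?_⟩
  · have hW : HasDerivAt (fun s => 1 / 2 * max (p s - α) 0 ^ 2) (max (p t - α) 0 * p' t) t :=
      (hasDerivAt_half_sq_max_zero (p t - α)).comp (h₂ := fun y => 1 / 2 * max y 0 ^ 2) t
        ((hp t ht).sub_const α)
    refine ⟨hW.differentiableAt, ?_⟩
    have hw : 0 ≤ max (p t - α) 0 := le_max_right _ _
    rw [hW.deriv, show 1 / 2 * max (p t - α) 0 ^ 2 / 2 = (max (p t - α) 0 / 2) ^ 2 by ring,
      show 2 * (1 / 2 * max (p t - α) 0 ^ 2) = max (p t - α) 0 ^ 2 by ring,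
      Real.sqrt_sq (by positivity), Real.sqrt_sq hw]
    exact max_sub_zero_mul_le_of_le hρ.2.1.monotoneOn hρ.2.2.1 hlam.1.le hlam.2.le hα (hpnn t ht)
      (hp' t ht)
  · have hsqrt_mul {c : ℝ} (hc : 0 < c) : IsClassKInf fun s => Real.sqrt (c * s) :=
      isClassKInf_sqrt.comp (isClassKInf_id.const_mul hc)
    convert ((hsqrt_mul (c := 2⁻¹) (by norm_num)).const_mul hlam.1).mul
      (hρ.comp (hsqrt_mul two_pos)) using 4 with s
    rw [div_eq_inv_mul]
end
end

section
/- Let n be a positive natural number and let P, Q : ℝ^n → [0,∞) be continuous functions that are both positive definite and radially unbounded. Then there exists a class K∞ function ρ such that ρ(P(x)) ≤ Q(x) for all x ∈ ℝ^n. -/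
noncomputable section

open Filter MeasureTheory Set Topology

/-!
Let `θ(s)` be the infimum of `Q` over the superlevel set `{P ≥ s}`. Since `Q` is continuous and
coercive, this infimum is attained, so `θ(P x) ≤ Q x`, `θ` is monotone, positive for `s > 0`
(because `P x ≥ s > 0` forces `x ≠ 0`) and unbounded (the sets `{P ≥ s}` eventually leave every
compact set). The function `θ` need not be continuous; replacing it by `ψ = min θ id`, which
forces `ψ(0+) = 0`, and then by the mean `ρ(s) = s⁻¹ ∫₀ˢ ψ` produces a continuous lower bound.
The mean of a monotone function is again monotone, and it is strictly increasing because `ψ` is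
strictly smaller near `0` than at `s`.
-/

namespace Monotone

variable {ψ : ℝ → ℝ} (hψ : Monotone ψ) {a b : ℝ}
include hψ

theorem mul_le_intervalIntegral (hab : a ≤ b) : (b - a) * ψ a ≤ ∫ t in a..b, ψ t := by
  simpa using intervalIntegral.integral_mono_on hab intervalIntegrable_const
    (hψ.intervalIntegrable (μ := volume)) fun t ht => hψ ht.1

theorem intervalIntegral_le_mul (hab : a ≤ b) : ∫ t in a..b, ψ t ≤ (b - a) * ψ b := by
  simpa using intervalIntegral.integral_mono_on hab (hψ.intervalIntegrable (μ := volume))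
    intervalIntegrable_const fun t ht => hψ ht.2

theorem intervalIntegral_add_adjacent_intervals (a b c : ℝ) :
    (∫ t in a..b, ψ t) + ∫ t in b..c, ψ t = ∫ t in a..c, ψ t :=
  intervalIntegral.integral_add_adjacent_intervals hψ.intervalIntegrable hψ.intervalIntegrable

end Monotone

def runningMean (ψ : ℝ → ℝ) (s : ℝ) : ℝ := (∫ t in (0 : ℝ)..s, ψ t) / s

@[simp]
theorem runningMean_zero (ψ : ℝ → ℝ) : runningMean ψ 0 = 0 := by
  simp [runningMean]

namespace runningMean

variable {ψ : ℝ → ℝ} (hψ : Monotone ψ) (h0 : ψ 0 = 0)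
include hψ h0

theorem integral_nonneg {s : ℝ} (hs : 0 ≤ s) : 0 ≤ ∫ t in (0 : ℝ)..s, ψ t :=
  intervalIntegral.integral_nonneg hs fun _ ht => h0 ▸ hψ ht.1

theorem nonneg {s : ℝ} (hs : 0 ≤ s) : 0 ≤ runningMean ψ s :=
  div_nonneg (integral_nonneg hψ h0 hs) hs

theorem le {s : ℝ} (hs : 0 ≤ s) : runningMean ψ s ≤ ψ s := by
  rcases hs.eq_or_lt with rfl | hs
  · simp [h0]
  · rw [runningMean, div_le_iff₀ hs, mul_comm]
    simpa using hψ.intervalIntegral_le_mul hs.le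

theorem continuousOn (hcont : ContinuousWithinAt ψ (Ici 0) 0) :
    ContinuousOn (runningMean ψ) (Ici 0) := by
  intro s hs
  rcases (mem_Ici.mp hs).eq_or_lt with rfl | hs
  · rw [ContinuousWithinAt, h0] at hcont
    rw [ContinuousWithinAt, runningMean_zero]
    refine tendsto_of_tendsto_of_tendsto_of_le_of_le' tendsto_const_nhds hcont ?_ ?_
    · filter_upwards [self_mem_nhdsWithin] with t ht using nonneg hψ h0 ht
    · filter_upwards [self_mem_nhdsWithin] with t ht using le hψ h0 ht
  · refine ContinuousAt.continuousWithinAt ?_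
    exact ((intervalIntegral.continuous_primitive
      (fun _ _ => hψ.intervalIntegrable) 0).continuousAt).div continuousAt_id hs.ne'

theorem lt_of_pos (hcont : ContinuousWithinAt ψ (Ici 0) 0) (hpos : ∀ t, 0 < t → 0 < ψ t)
    {s : ℝ} (hs : 0 < s) : runningMean ψ s < ψ s := by
  have hright := hcont.mono Ioi_subset_Ici_self
  rw [ContinuousWithinAt, h0] at hright
  obtain ⟨ε, hεψ, hε⟩ : ∃ ε, ψ ε < ψ s ∧ ε ∈ Ioo 0 s :=
    ((hright.eventually (gt_mem_nhds (hpos s hs))).and (Ioo_mem_nhdsGT hs)).exists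
  have hsplit := hψ.intervalIntegral_add_adjacent_intervals 0 ε s
  have h1 := hψ.intervalIntegral_le_mul hε.1.le
  have h2 := hψ.intervalIntegral_le_mul hε.2.le
  rw [runningMean, div_lt_iff₀ hs, ← hsplit]
  linarith [mul_lt_mul_of_pos_left hεψ hε.1]

theorem strictMonoOn (hcont : ContinuousWithinAt ψ (Ici 0) 0) (hpos : ∀ t, 0 < t → 0 < ψ t) :
    StrictMonoOn (runningMean ψ) (Ici 0) := by
  intro a ha b hb hab
  have hb : 0 < b := (mem_Ici.mp ha).trans_lt hab
  rcases (mem_Ici.mp ha).eq_or_lt with rfl | ha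
  · rw [runningMean_zero]
    exact div_pos (intervalIntegral.intervalIntegral_pos_of_pos_on hψ.intervalIntegrable
      (fun t ht => hpos t ht.1) hb) hb
  · have hsplit := hψ.intervalIntegral_add_adjacent_intervals 0 a b
    have hgrowth := hψ.mul_le_intervalIntegral hab.le
    have hlt := lt_of_pos hψ h0 hcont hpos ha
    have hmean : (∫ t in (0 : ℝ)..a, ψ t) = a * runningMean ψ a := by
      rw [runningMean]; field_simp
    conv_rhs => rw [runningMean]
    rw [lt_div_iff₀ hb, ← hsplit, hmean]
    linarith [mul_lt_mul_of_pos_left hlt (sub_pos.2 hab)]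

theorem tendsto_atTop (htop : Tendsto ψ atTop atTop) : Tendsto (runningMean ψ) atTop atTop := by
  refine tendsto_atTop_mono' atTop ?_
    ((htop.comp (tendsto_id.atTop_div_const two_pos)).atTop_div_const two_pos)
  filter_upwards [eventually_gt_atTop 0] with s hs
  have hsplit := hψ.intervalIntegral_add_adjacent_intervals 0 (s / 2) s
  have hhalf := hψ.mul_le_intervalIntegral (a := s / 2) (b := s) (by linarith)
  have hnonneg := integral_nonneg hψ h0 (s := s / 2) (by linarith)
  rw [Function.comp_apply, id, runningMean, div_le_div_iff₀ two_pos hs, ← hsplit]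
  linarith

theorem isClassKInf (hcont : ContinuousWithinAt ψ (Ici 0) 0) (hpos : ∀ t, 0 < t → 0 < ψ t)
    (htop : Tendsto ψ atTop atTop) : IsClassKInf (runningMean ψ) :=
  ⟨continuousOn hψ h0 hcont, strictMonoOn hψ h0 hcont hpos, runningMean_zero ψ,
    fun _ => nonneg hψ h0, tendsto_atTop hψ h0 htop⟩

end runningMean

theorem exists_isClassKInf_le_of_monotone {θ : ℝ → ℝ} (hθ : Monotone θ) (h0 : 0 ≤ θ 0)
    (hpos : ∀ t, 0 < t → 0 < θ t) (htop : Tendsto θ atTop atTop) :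
    ∃ ρ, IsClassKInf ρ ∧ ∀ s, 0 ≤ s → ρ s ≤ θ s := by
  set ψ : ℝ → ℝ := fun t => min (θ t) t
  have hψ : Monotone ψ := hθ.min monotone_id
  have hψ0 : ψ 0 = 0 := min_eq_right h0
  have hcont : ContinuousWithinAt ψ (Ici 0) 0 := by
    rw [ContinuousWithinAt, hψ0]
    refine tendsto_of_tendsto_of_tendsto_of_le_of_le' tendsto_const_nhds
      (continuousWithinAt_id (x := (0 : ℝ)) (s := Ici 0)) ?_ ?_
    · filter_upwards [self_mem_nhdsWithin] with t ht using hψ0 ▸ hψ ht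
    · filter_upwards with t using min_le_right _ _
  refine ⟨runningMean ψ, runningMean.isClassKInf hψ hψ0 hcont
    (fun t ht => lt_min (hpos t ht) ht) (tendsto_inf_atTop atTop htop tendsto_id), ?_⟩
  exact fun s hs => (runningMean.le hψ hψ0 hs).trans (min_le_left _ _)

section Superlevel

variable {X : Type*} {P Q : X → ℝ}

def superlevelInf (P Q : X → ℝ) (s : ℝ) : ℝ := sInf (Q '' {x | s ≤ P x})

theorem superlevelInf_nonneg (hQ0 : ∀ x, 0 ≤ Q x) (s : ℝ) : 0 ≤ superlevelInf P Q s :=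
  Real.sInf_nonneg (by rintro _ ⟨x, -, rfl⟩; exact hQ0 x)

variable [TopologicalSpace X] (hP : Continuous P) (hQ : Continuous Q) (hQtop : Tendsto Q (cocompact X) atTop)
include hP hQ hQtop

theorem exists_isLeast_image_superlevel {s : ℝ} (hs : ∃ x, s ≤ P x) :
    ∃ x, s ≤ P x ∧ IsLeast (Q '' {y | s ≤ P y}) (Q x) := by
  obtain ⟨x₀, hx₀⟩ := hs
  obtain ⟨x, hx, hmin⟩ := hQ.continuousOn.exists_isMinOn' (isClosed_le continuous_const hP) hx₀
    ((hQtop.eventually_ge_atTop (Q x₀)).filter_mono inf_le_left)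
  refine ⟨x, hx, mem_image_of_mem Q hx, ?_⟩
  rintro _ ⟨y, hy, rfl⟩
  exact hmin hy

theorem exists_superlevelInf_eq {s : ℝ} (hs : ∃ x, s ≤ P x) :
    ∃ x, s ≤ P x ∧ superlevelInf P Q s = Q x := by
  obtain ⟨x, hx, hleast⟩ := exists_isLeast_image_superlevel hP hQ hQtop hs
  exact ⟨x, hx, hleast.csInf_eq⟩

theorem superlevelInf_le_of_le {s : ℝ} {x : X} (hx : s ≤ P x) : superlevelInf P Q s ≤ Q x := by
  obtain ⟨_, -, hleast⟩ := exists_isLeast_image_superlevel hP hQ hQtop ⟨x, hx⟩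
  exact hleast.csInf_eq.trans_le (hleast.2 ⟨x, hx, rfl⟩)

variable (hPunb : ∀ s, ∃ x, s ≤ P x)
include hPunb

theorem monotone_superlevelInf : Monotone (superlevelInf P Q) := by
  intro a b hab
  obtain ⟨x, hx, hθx⟩ := exists_superlevelInf_eq hP hQ hQtop (hPunb b)
  exact hθx ▸ superlevelInf_le_of_le hP hQ hQtop (hab.trans hx)

theorem superlevelInf_pos (hPQ : ∀ x, 0 < P x → 0 < Q x) {s : ℝ} (hs : 0 < s) :
    0 < superlevelInf P Q s := by
  obtain ⟨x, hx, hθx⟩ := exists_superlevelInf_eq hP hQ hQtop (hPunb s)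
  exact hθx ▸ hPQ x (hs.trans_le hx)

theorem tendsto_superlevelInf_atTop : Tendsto (superlevelInf P Q) atTop atTop := by
  refine tendsto_atTop.2 fun M => ?_
  obtain ⟨K, hK, hQK⟩ := mem_cocompact.1 (hQtop.eventually_ge_atTop M)
  obtain ⟨C, hC⟩ := hK.bddAbove_image hP.continuousOn
  filter_upwards [eventually_gt_atTop C] with s hs
  obtain ⟨x, hx, hθx⟩ := exists_superlevelInf_eq hP hQ hQtop (hPunb s)
  refine hθx ▸ hQK fun hxK => ?_
  linarith [hC (mem_image_of_mem P hxK)]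

end Superlevel

/-- For any two continuous, positive definite and radially unbounded functions `P, Q` there is a
class `K∞` function `ρ` with `ρ(P(x)) ≤ Q(x)` for all `x`. -/
theorem exists_Kinf_between {n : ℕ} (hn : 0 < n)
    (P Q : EuclideanSpace ℝ (Fin n) → ℝ)
    (hPc : Continuous P) (hPpos : PosDefRadUnbounded P)
    (hQc : Continuous Q) (hQpos : PosDefRadUnbounded Q) :
    ∃ ρ : ℝ → ℝ, IsClassKInf ρ ∧ ∀ x, ρ (P x) ≤ Q x := by
  obtain ⟨hP0, -, hPnn, hPtop⟩ := hPpos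
  obtain ⟨-, hQpos, hQnn, hQtop⟩ := hQpos
  have : Nonempty (Fin n) := ⟨⟨0, hn⟩⟩
  rw [Metric.cobounded_eq_cocompact] at hPtop hQtop
  have hPunb : ∀ s, ∃ x, s ≤ P x := fun s => (hPtop.eventually_ge_atTop s).exists
  have hPQ : ∀ x, 0 < P x → 0 < Q x := fun x hx =>
    hQpos x (by rintro rfl; exact hx.ne' hP0)
  obtain ⟨ρ, hρ, hρθ⟩ := exists_isClassKInf_le_of_monotone
    (monotone_superlevelInf hPc hQc hQtop hPunb) (superlevelInf_nonneg hQnn 0)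
    (fun _ => superlevelInf_pos hPc hQc hQtop hPunb hPQ)
    (tendsto_superlevelInf_atTop hPc hQc hQtop hPunb)
  exact ⟨ρ, hρ, fun x => (hρθ _ (hPnn x)).trans (superlevelInf_le_of_le hPc hQc hQtop le_rfl)⟩

end
end

section
/- (Base case of the backstepping design.) Let p be a positive natural number and m a natural number, and consider the scalar system ẋ₁ = f₁(x₁) + g₁(x₁)·x₂ + Σ_{j=1}^p φ_{1,j}(x₁)·θ_j, where f₁, g₁, φ_{1,j} : ℝ → ℝ are C^∞ with f₁(0) = 0, φ_{1,j}(0) = 0 and g₁(x₁) ≠ 0 for all x₁, x₂ ∈ ℝ is the input and θ ∈ ℝ^p is a constant unknown parameter vector. Let r ≥ 0, α, ω, ε > 0 and γ_j > 0 (j = 1,…,p) be constants, and let ρ_j : ℝ → [1,∞) be C^∞ functions with |φ_{1,j}(x₁)| ≤ ρ_j(x₁)·|x₁| for all x₁ ∈ ℝ. Define M̃(x₁,θ̂) := α + ω + (2^{m−2}/ε)·Σ_{j=1}^p φ_{1,j}(x₁)² + ½·Σ_{j=1}^p (1 + 2√r + θ̂_j²)·ρ_j(x₁), k(x₁,θ̂)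 := −(1/g₁(x₁))·( f₁(x₁) + Σ_{j=1}^p φ_{1,j}(x₁)·θ̂_j + M̃(x₁,θ̂)·x₁ ), and w_j(x₁,θ̂) := γ_j·x₁·φ_{1,j}(x₁) for j = 1,…,p. Then for all (x₁,θ̂,θ) ∈ ℝ × ℝ^p × ℝ^p: (a) x₁·( f₁(x₁) + g₁(x₁)·k(x₁,θ̂) + Σ_{j=1}^p φ_{1,j}(x₁)·θ_j ) + Σ_{j=1}^p (1/γ_j)·(θ̂_j − θ_j)·w_j(x₁,θ̂) ≤ −α·x₁², and (b) x₁·( f₁(x₁) + g₁(x₁)·k(x₁,θ̂) + Σ_{j=1}^p φ_{1,j}(x₁)·θ_j ) ≤ −ω·x₁² + 2^{−m}·ε·(|θ|² − r)^+. -/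
/-!
Substituting the control law, the closed-loop drift is `x ⟨φ, θ⟩ - x ⟨φ, θ̂⟩ - M̃ x²`, and the
update law `w` cancels the two parameter terms exactly, which gives (a). For (b), the `θ̂`-term is
absorbed by the `½ (1 + θ̂ⱼ²) ρⱼ` part of `M̃` because `|x φⱼ θ̂ⱼ| ≤ ρⱼ x² |θ̂ⱼ|`. The `θ`-term is
bounded by Cauchy–Schwarz and `|θ| ≤ √r + √((|θ|² - r)⁺)`: the `√r` part is absorbed by `√r ρⱼ`,
and Young's inequality splits the other part into `2^(m-2)/ε · Σ φⱼ²` (absorbed by `M̃`) and the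
remainder `2^(-m) ε (|θ|² - r)⁺`, the two constants multiplying to `1/4`.
-/

open Finset

open scoped ContDiff

namespace Real

lemma sqrt_sum_sq_le_sum_abs {ι : Type*} (s : Finset ι) (f : ι → ℝ) :
    √(∑ i ∈ s, f i ^ 2) ≤ ∑ i ∈ s, |f i| := by
  refine (sqrt_le_left (sum_nonneg fun i _ ↦ abs_nonneg (f i))).2 ?_
  simpa only [sq_abs] using sum_sq_le_sq_sum_of_nonneg fun i _ ↦ abs_nonneg (f i)

lemma sqrt_add_le_sqrt_add_sqrt {x y : ℝ} (hx : 0 ≤ x) (hy : 0 ≤ y) :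
    √(x + y) ≤ √x + √y := by
  refine (sqrt_le_left (by positivity)).2 ?_
  nlinarith [sq_sqrt hx, sq_sqrt hy, mul_nonneg (sqrt_nonneg x) (sqrt_nonneg y)]

lemma sqrt_le_sqrt_add_sqrt_max_sub {q r : ℝ} (hr : 0 ≤ r) :
    √q ≤ √r + √(max (q - r) 0) :=
  calc √q ≤ √(r + max (q - r) 0) := sqrt_le_sqrt (by linarith [le_max_left (q - r) 0])
    _ ≤ √r + √(max (q - r) 0) := sqrt_add_le_sqrt_add_sqrt hr (le_max_right _ _)

end Real

lemma mul_le_mul_sq_add_mul_sq {a b c d : ℝ} (hc : 0 < c) (hcd : c * d = 1 / 4) :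
    a * b ≤ c * a ^ 2 + d * b ^ 2 := by
  nlinarith [sq_nonneg (2 * c * a - b)]

lemma two_zpow_sub_two_div_mul_two_zpow_neg_mul (m : ℤ) {ε : ℝ} (hε : ε ≠ 0) :
    (2 : ℝ) ^ (m - 2) / ε * ((2 : ℝ) ^ (-m) * ε) = 1 / 4 :=
  calc (2 : ℝ) ^ (m - 2) / ε * ((2 : ℝ) ^ (-m) * ε) = 2 ^ (m - 2 + -m) * (ε / ε) := by
        rw [zpow_add₀ two_ne_zero]; ring
    _ = 1 / 4 := by rw [div_self hε, show m - 2 + -m = -2 by ring]; norm_num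

lemma neg_mul_mul_le_of_abs_le {x b t ρ : ℝ} (hb : |b| ≤ ρ * |x|) :
    -(x * (b * t)) ≤ 1 / 2 * x ^ 2 * ((1 + t ^ 2) * ρ) := by
  have hρx : 0 ≤ ρ * x ^ 2 := by
    have := mul_nonneg ((abs_nonneg b).trans hb) (abs_nonneg x)
    rwa [mul_assoc, abs_mul_abs_self, ← sq] at this
  calc -(x * (b * t)) ≤ |x| * |b| * |t| := by
        rw [← abs_mul, ← abs_mul, ← mul_assoc]; exact neg_le_abs _
    _ ≤ |x| * (ρ * |x|) * |t| := by gcongr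
    _ = ρ * x ^ 2 * |t| := by rw [← sq_abs x]; ring
    _ ≤ ρ * x ^ 2 * ((1 + t ^ 2) / 2) := by
        gcongr; nlinarith [sq_nonneg (|t| - 1), sq_abs t]
    _ = 1 / 2 * x ^ 2 * ((1 + t ^ 2) * ρ) := by ring

section Damping

variable {ι : Type*} [Fintype ι] {x r c d : ℝ} {Φ ρ θ θh : ι → ℝ}

lemma sum_inv_mul_sub_mul_mul_eq (γ : ι → ℝ) (hγ : ∀ j, γ j ≠ 0) :
    ∑ j, 1 / γ j * (θh j - θ j) * (γ j * x * Φ j)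
      = x * ∑ j, Φ j * θh j - x * ∑ j, Φ j * θ j := by
  rw [mul_sum, mul_sum, ← sum_sub_distrib]
  refine sum_congr rfl fun j _ ↦ ?_
  field_simp [hγ j]

lemma mul_sum_mul_le (hΦ : ∀ j, |Φ j| ≤ ρ j * |x|) (hr : 0 ≤ r) (hc : 0 < c)
    (hcd : c * d = 1 / 4) :
    x * ∑ j, Φ j * θ j
      ≤ x ^ 2 * (c * ∑ j, Φ j ^ 2 + √r * ∑ j, ρ j) + d * max (∑ j, θ j ^ 2 - r) 0 := by
  set s := max (∑ j, θ j ^ 2 - r) 0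
  set a := |x| * √(∑ j, Φ j ^ 2)
  have ha : a ≤ x ^ 2 * ∑ j, ρ j :=
    calc |x| * √(∑ j, Φ j ^ 2) ≤ |x| * ∑ j, ρ j * |x| := by
          gcongr
          exact (Real.sqrt_sum_sq_le_sum_abs _ _).trans (sum_le_sum fun j _ ↦ hΦ j)
      _ = x ^ 2 * ∑ j, ρ j := by rw [← sum_mul, ← sq_abs x]; ring
  calc x * ∑ j, Φ j * θ j = ∑ j, x * Φ j * θ j := by simp only [mul_sum, mul_assoc]
    _ ≤ √(∑ j, (x * Φ j) ^ 2) * √(∑ j, θ j ^ 2) := Real.sum_mul_le_sqrt_mul_sqrt _ _ _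
    _ = a * √(∑ j, θ j ^ 2) := by
        simp only [a, mul_pow, ← mul_sum, Real.sqrt_mul (sq_nonneg x), Real.sqrt_sq_eq_abs]
    _ ≤ a * (√r + √s) := by gcongr; exact Real.sqrt_le_sqrt_add_sqrt_max_sub hr
    _ = a * √r + a * √s := by ring
    _ ≤ x ^ 2 * (∑ j, ρ j) * √r + (c * a ^ 2 + d * √s ^ 2) := by
        gcongr
        exact mul_le_mul_sq_add_mul_sq hc hcd
    _ = x ^ 2 * (c * ∑ j, Φ j ^ 2 + √r * ∑ j, ρ j) + d * s := by
        rw [Real.sq_sqrt (le_max_right _ _), mul_pow, sq_abs,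
          Real.sq_sqrt (sum_nonneg fun j _ ↦ sq_nonneg _)]
        ring

lemma neg_mul_sum_mul_le (hΦ : ∀ j, |Φ j| ≤ ρ j * |x|) :
    -(x * ∑ j, Φ j * θh j) ≤ 1 / 2 * x ^ 2 * ∑ j, (1 + θh j ^ 2) * ρ j := by
  rw [mul_sum, ← sum_neg_distrib, mul_sum]
  exact sum_le_sum fun j _ ↦ neg_mul_mul_le_of_abs_le (hΦ j)

lemma mul_sum_mul_sub_mul_sum_mul_le (hΦ : ∀ j, |Φ j| ≤ ρ j * |x|) (hr : 0 ≤ r) (hc : 0 < c)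
    (hcd : c * d = 1 / 4) :
    x * ∑ j, Φ j * θ j - x * ∑ j, Φ j * θh j
      ≤ x ^ 2 * (c * ∑ j, Φ j ^ 2 + 1 / 2 * ∑ j, (1 + 2 * √r + θh j ^ 2) * ρ j)
        + d * max (∑ j, θ j ^ 2 - r) 0 := by
  have hsplit : 1 / 2 * ∑ j, (1 + 2 * √r + θh j ^ 2) * ρ j
      = √r * ∑ j, ρ j + 1 / 2 * ∑ j, (1 + θh j ^ 2) * ρ j := by
    simp only [mul_sum, ← sum_add_distrib]
    exact sum_congr rfl fun j _ ↦ by ring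
  rw [hsplit]
  linarith [mul_sum_mul_le (θ := θ) hΦ hr hc hcd, neg_mul_sum_mul_le (θh := θh) hΦ]

end Damping

theorem backstepping_base_case_general {p : ℕ} (m : ℕ)
    (f₁ g₁ : ℝ → ℝ) (φ : Fin p → ℝ → ℝ)
    (hgne : ∀ x, g₁ x ≠ 0)
    (r α omeg ε : ℝ) (hr : 0 ≤ r) (hα : 0 < α) (homeg : 0 < omeg) (hε : 0 < ε)
    (γ : Fin p → ℝ) (hγ : ∀ j, 0 < γ j)
    (ρ : Fin p → ℝ → ℝ) (hρ1 : ∀ j x, 1 ≤ ρ j x)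
    (hρb : ∀ j x, |φ j x| ≤ ρ j x * |x|)
    (Mt : ℝ → EuclideanSpace ℝ (Fin p) → ℝ)
    (hMt : ∀ x θh, Mt x θh = α + omeg + ((2 : ℝ) ^ ((m : ℤ) - 2) / ε) * ∑ j, (φ j x) ^ 2
        + (1 / 2) * ∑ j, (1 + 2 * Real.sqrt r + (θh j) ^ 2) * ρ j x)
    (k : ℝ → EuclideanSpace ℝ (Fin p) → ℝ)
    (hk : ∀ x θh, k x θh = -(1 / g₁ x) * (f₁ x + ∑ j, φ j x * θh j + Mt x θh * x))
    (w : ℝ → EuclideanSpace ℝ (Fin p) → Fin p → ℝ)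
    (hw : ∀ x θh j, w x θh j = γ j * x * φ j x) :
    ∀ (x : ℝ) (θh θ : EuclideanSpace ℝ (Fin p)),
      (x * (f₁ x + g₁ x * k x θh + ∑ j, φ j x * θ j)
          + ∑ j, (1 / γ j) * (θh j - θ j) * w x θh j ≤ -α * x ^ 2) ∧
      (x * (f₁ x + g₁ x * k x θh + ∑ j, φ j x * θ j)
        ≤ -omeg * x ^ 2 + (2 : ℝ) ^ (-(m : ℤ)) * ε * max (‖θ‖ ^ 2 - r) 0) := by
  intro x θh θ
  have hloop : x * (f₁ x + g₁ x * k x θh + ∑ j, φ j x * θ j)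
      = x * ∑ j, φ j x * θ j - x * ∑ j, φ j x * θh j - Mt x θh * x ^ 2 := by
    rw [hk]; field_simp [hgne x]; ring
  set c := (2 : ℝ) ^ ((m : ℤ) - 2) / ε
  set D := c * ∑ j, φ j x ^ 2 + 1 / 2 * ∑ j, (1 + 2 * √r + θh j ^ 2) * ρ j x
  have hM : Mt x θh = α + omeg + D := by rw [hMt]; ring
  have hD : 0 ≤ D := by
    have hc : 0 ≤ c := by positivity
    refine add_nonneg (mul_nonneg hc (sum_nonneg fun j _ ↦ sq_nonneg _)) ?_
    exact mul_nonneg (by norm_num) (sum_nonneg fun j _ ↦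
      mul_nonneg (by positivity) (zero_le_one.trans (hρ1 j x)))
  refine ⟨?_, ?_⟩
  · simp only [hw, sum_inv_mul_sub_mul_mul_eq γ fun j ↦ (hγ j).ne', hloop, hM]
    nlinarith [mul_nonneg (add_nonneg homeg.le hD) (sq_nonneg x)]
  · have hdamp : _ ≤ x ^ 2 * D + _ :=
      mul_sum_mul_sub_mul_sum_mul_le (θ := θ) (θh := θh) (fun j ↦ hρb j x) hr (by positivity)
        (two_zpow_sub_two_div_mul_two_zpow_neg_mul m hε.ne')
    rw [hloop, hM, EuclideanSpace.real_norm_sq_eq]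
    nlinarith [mul_nonneg hα.le (sq_nonneg x)]

/-- Base case of the backstepping design: the scalar controller with nonlinear damping term
`M̃ (x₁, θ̂)` satisfies the two Lyapunov-type inequalities. -/
theorem backstepping_base_case {p : ℕ} (hp : 0 < p) (m : ℕ)
    (f₁ g₁ : ℝ → ℝ) (φ : Fin p → ℝ → ℝ)
    (hf : ContDiff ℝ ∞ f₁) (hg : ContDiff ℝ ∞ g₁) (hφ : ∀ j, ContDiff ℝ ∞ (φ j))
    (hf0 : f₁ 0 = 0) (hφ0 : ∀ j, φ j 0 = 0) (hgne : ∀ x, g₁ x ≠ 0)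
    (r α omeg ε : ℝ) (hr : 0 ≤ r) (hα : 0 < α) (homeg : 0 < omeg) (hε : 0 < ε)
    (γ : Fin p → ℝ) (hγ : ∀ j, 0 < γ j)
    (ρ : Fin p → ℝ → ℝ) (hρs : ∀ j, ContDiff ℝ ∞ (ρ j)) (hρ1 : ∀ j x, 1 ≤ ρ j x)
    (hρb : ∀ j x, |φ j x| ≤ ρ j x * |x|)
    (Mt : ℝ → EuclideanSpace ℝ (Fin p) → ℝ)
    (hMt : ∀ x θh, Mt x θh = α + omeg + ((2 : ℝ) ^ ((m : ℤ) - 2) / ε) * ∑ j, (φ j x) ^ 2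
        + (1 / 2) * ∑ j, (1 + 2 * Real.sqrt r + (θh j) ^ 2) * ρ j x)
    (k : ℝ → EuclideanSpace ℝ (Fin p) → ℝ)
    (hk : ∀ x θh, k x θh = -(1 / g₁ x) * (f₁ x + ∑ j, φ j x * θh j + Mt x θh * x))
    (w : ℝ → EuclideanSpace ℝ (Fin p) → Fin p → ℝ)
    (hw : ∀ x θh j, w x θh j = γ j * x * φ j x) :
    ∀ (x : ℝ) (θh θ : EuclideanSpace ℝ (Fin p)),
      (x * (f₁ x + g₁ x * k x θh + ∑ j, φ j x * θ j)
          + ∑ j, (1 / γ j) * (θh j - θ j) * w x θh j ≤ -α * x ^ 2) ∧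
      (x * (f₁ x + g₁ x * k x θh + ∑ j, φ j x * θ j)
        ≤ -omeg * x ^ 2 + (2 : ℝ) ^ (-(m : ℤ)) * ε * max (‖θ‖ ^ 2 - r) 0) :=
  backstepping_base_case_general m f₁ g₁ φ hgne r α omeg ε hr hα homeg hε γ hγ ρ hρ1 hρb Mt hMt k hk
    w hw
end

section
/- (Standard adaptive controller for the Moore–Greitzer model.) Let Q, γ₁, γ₂, μ > 0 be constants. For (x₁,x₂,θ̂₁,θ̂₂,θ₁,θ₂) ∈ ℝ⁶ define z := x₂ + θ̂₁x₁² + θ̂₂x₁³ + μx₁, w₁ := γ₁Q·x₁²·z·(2θ̂₁x₁ + 3θ̂₂x₁² + μ) + γ₁x₁³, w₂ := γ₂Q·x₁³·z·(2θ̂₁x₁ + 3θ̂₂x₁² + μ) + γ₂x₁⁴, u := −(Q^{-1} + μ²)·x₁ − w₁·x₁² − w₂·x₁³ − (2θ̂₁x₁ + 3θ̂₂x₁² + 2μ)·(θ̂₁x₁² + θ̂₂x₁³ + x₂), and V(x₁,x₂,θ̂₁,θ̂₂) := ½x₁² + (Q/2)·z² + (1/(2γ₁))·(θ̂₁ − θ₁)²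 + (1/(2γ₂))·(θ̂₂ − θ₂)². Then for all (x₁,x₂,θ̂₁,θ̂₂,θ₁,θ₂) ∈ ℝ⁶ the derivative of V along the closed-loop vector field of the system ẋ₁ = θ₁x₁² + θ₂x₁³ + x₂, ẋ₂ = u, θ̂₁' = w₁, θ̂₂' = w₂, namely the quantity (∂V/∂x₁)·(θ₁x₁² + θ₂x₁³ + x₂) + (∂V/∂x₂)·u + (∂V/∂θ̂₁)·w₁ + (∂V/∂θ̂₂)·w₂, is at most −μx₁² − μQ·z². -/
/-!
Write `θ̃ᵢ = θ̂ᵢ - θᵢ` and `α = θ̂₁x₁² + θ̂₂x₁³ + μx₁`, so that `z = x₂ + α`. Along the closed loop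
`ẋ₁ = -μx₁ + z - θ̃₁x₁² - θ̃₂x₁³` and `ż = u + w₁x₁² + w₂x₁³ + (∂α/∂x₁)ẋ₁`. In `V̇` the update
laws `w₁, w₂` cancel every term containing `θ̃₁` or `θ̃₂`, and `u` cancels the rest except
`-μx₁² - μQz²`: the inequality is in fact an identity.
-/

noncomputable section

def surgeError (μ x₁ x₂ a b : ℝ) : ℝ := x₂ + a * x₁ ^ 2 + b * x₁ ^ 3 + μ * x₁

section Partials

variable (μ x₁ x₂ a b : ℝ)

theorem hasDerivAt_surgeError_x₁ :
    HasDerivAt (fun s => surgeError μ s x₂ a b) (2 * a * x₁ + 3 * b * x₁ ^ 2 + μ) x₁ := by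
  unfold surgeError
  have h := (((hasDerivAt_const x₁ x₂).add ((hasDerivAt_pow 2 x₁).const_mul a)).add
    ((hasDerivAt_pow 3 x₁).const_mul b)).add ((hasDerivAt_id x₁).const_mul μ)
  refine h.congr_deriv ?_
  push_cast
  ring

theorem hasDerivAt_surgeError_x₂ : HasDerivAt (fun s => surgeError μ x₁ s a b) 1 x₂ :=
  (((hasDerivAt_id x₂).add_const _).add_const _).add_const _

theorem hasDerivAt_surgeError_a :
    HasDerivAt (fun s => surgeError μ x₁ x₂ s b) (x₁ ^ 2) a := by
  unfold surgeError
  simpa using ((((hasDerivAt_id' a).mul_const (x₁ ^ 2)).const_add x₂).add_const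
    (b * x₁ ^ 3)).add_const (μ * x₁)

theorem hasDerivAt_surgeError_b :
    HasDerivAt (fun s => surgeError μ x₁ x₂ a s) (x₁ ^ 3) b := by
  unfold surgeError
  simpa using (((hasDerivAt_id' b).mul_const (x₁ ^ 3)).const_add (x₂ + a * x₁ ^ 2)).add_const
    (μ * x₁)

end Partials

theorem hasDerivAt_lyapunov (Q γ₁ γ₂ θ₁ θ₂ : ℝ) {X Z A B : ℝ → ℝ} {X' Z' A' B' s : ℝ}
    (hX : HasDerivAt X X' s) (hZ : HasDerivAt Z Z' s) (hA : HasDerivAt A A' s)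
    (hB : HasDerivAt B B' s) :
    HasDerivAt (fun s => 1 / 2 * X s ^ 2 + Q / 2 * Z s ^ 2
        + 1 / (2 * γ₁) * (A s - θ₁) ^ 2 + 1 / (2 * γ₂) * (B s - θ₂) ^ 2)
      (X s * X' + Q * Z s * Z' + (A s - θ₁) / γ₁ * A' + (B s - θ₂) / γ₂ * B') s := by
  have h := ((((hX.pow 2).const_mul (1 / 2)).add ((hZ.pow 2).const_mul (Q / 2))).add
    (((hA.sub_const θ₁).pow 2).const_mul (1 / (2 * γ₁)))).add
    (((hB.sub_const θ₂).pow 2).const_mul (1 / (2 * γ₂)))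
  refine h.congr_deriv ?_
  push_cast
  ring

theorem moore_greitzer_standard_controller_general
    (Q γ₁ γ₂ μ : ℝ) (hQ : 0 < Q) (hγ₁ : 0 < γ₁) (hγ₂ : 0 < γ₂)
    (θ₁ θ₂ : ℝ)
    (z w₁ w₂ u V : ℝ → ℝ → ℝ → ℝ → ℝ)
    (hz : ∀ x₁ x₂ a b, z x₁ x₂ a b = x₂ + a * x₁ ^ 2 + b * x₁ ^ 3 + μ * x₁)
    (hw₁ : ∀ x₁ x₂ a b, w₁ x₁ x₂ a b =
      γ₁ * Q * x₁ ^ 2 * z x₁ x₂ a b * (2 * a * x₁ + 3 * b * x₁ ^ 2 + μ) + γ₁ * x₁ ^ 3)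
    (hw₂ : ∀ x₁ x₂ a b, w₂ x₁ x₂ a b =
      γ₂ * Q * x₁ ^ 3 * z x₁ x₂ a b * (2 * a * x₁ + 3 * b * x₁ ^ 2 + μ) + γ₂ * x₁ ^ 4)
    (hu : ∀ x₁ x₂ a b, u x₁ x₂ a b =
      -(Q⁻¹ + μ ^ 2) * x₁ - w₁ x₁ x₂ a b * x₁ ^ 2 - w₂ x₁ x₂ a b * x₁ ^ 3
        - (2 * a * x₁ + 3 * b * x₁ ^ 2 + 2 * μ) * (a * x₁ ^ 2 + b * x₁ ^ 3 + x₂))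
    (hV : ∀ x₁ x₂ a b, V x₁ x₂ a b =
      1 / 2 * x₁ ^ 2 + Q / 2 * (z x₁ x₂ a b) ^ 2
        + 1 / (2 * γ₁) * (a - θ₁) ^ 2 + 1 / (2 * γ₂) * (b - θ₂) ^ 2) :
    ∀ x₁ x₂ a b : ℝ,
      deriv (fun s => V s x₂ a b) x₁ * (θ₁ * x₁ ^ 2 + θ₂ * x₁ ^ 3 + x₂)
        + deriv (fun s => V x₁ s a b) x₂ * u x₁ x₂ a b
        + deriv (fun s => V x₁ x₂ s b) a * w₁ x₁ x₂ a b
        + deriv (fun s => V x₁ x₂ a s) b * w₂ x₁ x₂ a b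
      ≤ -μ * x₁ ^ 2 - μ * Q * (z x₁ x₂ a b) ^ 2 := by
  intro x₁ x₂ a b
  refine le_of_eq ?_
  obtain rfl : z = surgeError μ := by
    funext x₁ x₂ a b
    exact hz x₁ x₂ a b
  simp only [hV]
  rw [(hasDerivAt_lyapunov Q γ₁ γ₂ θ₁ θ₂ (hasDerivAt_id' x₁)
      (hasDerivAt_surgeError_x₁ μ x₁ x₂ a b) (hasDerivAt_const x₁ a)
      (hasDerivAt_const x₁ b)).deriv,
    (hasDerivAt_lyapunov Q γ₁ γ₂ θ₁ θ₂ (hasDerivAt_const x₂ x₁)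
      (hasDerivAt_surgeError_x₂ μ x₁ x₂ a b) (hasDerivAt_const x₂ a)
      (hasDerivAt_const x₂ b)).deriv,
    (hasDerivAt_lyapunov Q γ₁ γ₂ θ₁ θ₂ (hasDerivAt_const a x₁)
      (hasDerivAt_surgeError_a μ x₁ x₂ a b) (hasDerivAt_id' a)
      (hasDerivAt_const a b)).deriv,
    (hasDerivAt_lyapunov Q γ₁ γ₂ θ₁ θ₂ (hasDerivAt_const b x₁)
      (hasDerivAt_surgeError_b μ x₁ x₂ a b) (hasDerivAt_const b a)
      (hasDerivAt_id' b)).deriv,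
    hu, hw₁, hw₂]
  unfold surgeError
  field_simp
  ring

/-- Standard adaptive controller for the simplified Moore–Greitzer jet engine model: the
derivative of the Lyapunov function `V` along the closed-loop vector field is at most
`−μx₁² − μQz²`. -/
theorem moore_greitzer_standard_controller
    (Q γ₁ γ₂ μ : ℝ) (hQ : 0 < Q) (hγ₁ : 0 < γ₁) (hγ₂ : 0 < γ₂) (hμ : 0 < μ)
    (θ₁ θ₂ : ℝ)
    (z w₁ w₂ u V : ℝ → ℝ → ℝ → ℝ → ℝ)
    (hz : ∀ x₁ x₂ a b, z x₁ x₂ a b = x₂ + a * x₁ ^ 2 + b * x₁ ^ 3 + μ * x₁)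
    (hw₁ : ∀ x₁ x₂ a b, w₁ x₁ x₂ a b =
      γ₁ * Q * x₁ ^ 2 * z x₁ x₂ a b * (2 * a * x₁ + 3 * b * x₁ ^ 2 + μ) + γ₁ * x₁ ^ 3)
    (hw₂ : ∀ x₁ x₂ a b, w₂ x₁ x₂ a b =
      γ₂ * Q * x₁ ^ 3 * z x₁ x₂ a b * (2 * a * x₁ + 3 * b * x₁ ^ 2 + μ) + γ₂ * x₁ ^ 4)
    (hu : ∀ x₁ x₂ a b, u x₁ x₂ a b =
      -(Q⁻¹ + μ ^ 2) * x₁ - w₁ x₁ x₂ a b * x₁ ^ 2 - w₂ x₁ x₂ a b * x₁ ^ 3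
        - (2 * a * x₁ + 3 * b * x₁ ^ 2 + 2 * μ) * (a * x₁ ^ 2 + b * x₁ ^ 3 + x₂))
    (hV : ∀ x₁ x₂ a b, V x₁ x₂ a b =
      1 / 2 * x₁ ^ 2 + Q / 2 * (z x₁ x₂ a b) ^ 2
        + 1 / (2 * γ₁) * (a - θ₁) ^ 2 + 1 / (2 * γ₂) * (b - θ₂) ^ 2) :
    ∀ x₁ x₂ a b : ℝ,
      deriv (fun s => V s x₂ a b) x₁ * (θ₁ * x₁ ^ 2 + θ₂ * x₁ ^ 3 + x₂)
        + deriv (fun s => V x₁ s a b) x₂ * u x₁ x₂ a b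
        + deriv (fun s => V x₁ x₂ s b) a * w₁ x₁ x₂ a b
        + deriv (fun s => V x₁ x₂ a s) b * w₂ x₁ x₂ a b
      ≤ -μ * x₁ ^ 2 - μ * Q * (z x₁ x₂ a b) ^ 2 :=
  moore_greitzer_standard_controller_general Q γ₁ γ₂ μ hQ hγ₁ hγ₂ θ₁ θ₂ z w₁ w₂ u V hz hw₁ hw₂ hu hV

end
end

section
/- (New adaptive controller for the Moore–Greitzer model.) Let Q, γ₁, γ₂, μ, ε > 0 and r ≥ 0 be constants. For (x₁,x₂,θ̂₁,θ̂₂,θ₁,θ₂) ∈ ℝ⁶ define M := 2μ + (θ̂₁² + θ̂₂² + r)/2 + x₁² + (1 + 1/(2ε))·x₁⁴ + (1/(2ε))·x₁⁶, z := x₂ + θ̂₁x₁² + θ̂₂x₁³ + M·x₁, φ := 2θ̂₁x₁ + 3θ̂₂x₁² + M + x₁²·(2 + 2·((2ε+1)/ε)·x₁² + (3/ε)·x₁⁴), G := μ + Q·x₁²·(1 + x₁²)·φ²·( x₁²/(2ε) + (θ̂₁² + θ̂₂² + r)/μ ), w₁ := γ₁·x₁²·(Q·z·φ + x₁), w₂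 := γ₂·x₁³·(Q·z·φ + x₁), u := −Q^{-1}·x₁ − (x₁ + θ̂₁)·x₁·w₁ − (x₁² + θ̂₂)·x₁·w₂ − G·z + φ·(M·x₁ − z), U := ½x₁² + (Q/2)·z², and W := U + (1/(2γ₁))·(θ̂₁ − θ₁)² + (1/(2γ₂))·(θ̂₂ − θ₂)². Then for all (x₁,x₂,θ̂₁,θ̂₂,θ₁,θ₂) ∈ ℝ⁶, along the closed-loop vector field of the system ẋ₁ = θ₁x₁² + θ₂x₁³ + x₂, ẋ₂ = u, θ̂₁' = w₁, θ̂₂' = w₂, the derivative of W (i.e. the sum of its partial derivatives with respect to x₁, x₂, θ̂₁, θ̂₂ contracted with the closed-loop vector field) is at most −μ·U, and the derivative of U along the same vector field is at most −μ·U + ε·(θ₁² + θ₂² − r)^+, where (s)^+ denotes max(s,0). -/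
/-!
Write `z` for the backstepping error, `φ = ∂z/∂x₁`, `θ̂ = (a, b)` and `v = (x₁², x₁³)`. In `u`, the
term `-Q⁻¹x₁` cancels the cross term `x₁z` of `U̇`, the term `φ(Mx₁ - z)` the drift of `z`, and the
`w₁, w₂` terms the dependence of `z` on `θ̂`; so along the closed loop
`U̇ = (x₁ + Qzφ)⟪v, θ - θ̂⟫ - (Mx₁² + QGz²)`. The update laws `w₁, w₂` are chosen so that the
parameter-error part of `W` cancels the first term exactly, hence `Ẇ = -(Mx₁² + QGz²) ≤ -μU` as
`M ≥ 2μ` and `G ≥ μ`. For `U̇` split `θ = α + β` with `‖α‖² ≤ (‖θ‖² - r)⁺` and `‖β‖² ≤ r`: Young's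
inequality bounds the `α`-part by `ε(‖θ‖² - r)⁺` plus the `1/(2ε)`-terms of `M` and `G`, and the
`β - θ̂` part by terms in `‖θ̂‖² + r` that the remaining terms of `M` and `G` absorb.
-/

noncomputable section

open scoped RealInnerProductSpace

section Decomposition

variable {E : Type*} [NormedAddCommGroup E] [NormedSpace ℝ E]

theorem exists_add_eq_of_norm_le_add {v : E} {s t : ℝ} (hs : 0 ≤ s) (ht : 0 ≤ t)
    (hv : ‖v‖ ≤ s + t) : ∃ α β : E, α + β = v ∧ ‖α‖ ≤ s ∧ ‖β‖ ≤ t := by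
  rcases (add_nonneg hs ht).eq_or_lt with hst | hst
  · refine ⟨0, 0, ?_, by simpa using hs, by simpa using ht⟩
    rw [add_zero, eq_comm, ← norm_le_zero_iff]
    exact hv.trans hst.ge
  · have hscale : ∀ c, 0 ≤ c → ‖(c / (s + t)) • v‖ ≤ c := fun c hc => by
      rw [norm_smul, Real.norm_of_nonneg (by positivity), div_mul_eq_mul_div, div_le_iff₀ hst]
      exact mul_le_mul_of_nonneg_left hv hc
    refine ⟨(s / (s + t)) • v, (t / (s + t)) • v, ?_, hscale s hs, hscale t ht⟩
    rw [← add_smul, ← add_div, div_self hst.ne', one_smul]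

theorem exists_add_eq_of_norm_sq_le_add {v : E} {m r : ℝ} (hm : 0 ≤ m) (hr : 0 ≤ r)
    (hv : ‖v‖ ^ 2 ≤ m + r) : ∃ α β : E, α + β = v ∧ ‖α‖ ^ 2 ≤ m ∧ ‖β‖ ^ 2 ≤ r := by
  have hsum : ‖v‖ ≤ √m + √r := by
    refine le_of_sq_le_sq ?_ (by positivity)
    nlinarith [Real.sq_sqrt hm, Real.sq_sqrt hr, Real.sqrt_nonneg m, Real.sqrt_nonneg r,
      mul_nonneg (Real.sqrt_nonneg m) (Real.sqrt_nonneg r)]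
  obtain ⟨α, β, hαβ, hα, hβ⟩ :=
    exists_add_eq_of_norm_le_add (Real.sqrt_nonneg m) (Real.sqrt_nonneg r) hsum
  exact ⟨α, β, hαβ, (Real.le_sqrt (norm_nonneg α) hm).1 hα, (Real.le_sqrt (norm_nonneg β) hr).1 hβ⟩

end Decomposition

section InnerProduct

variable {E : Type*} [NormedAddCommGroup E] [InnerProductSpace ℝ E]

theorem add_mul_mul_inner_sub_le (u θ d : E) (X P : ℝ) {ε μ r : ℝ} (hε : 0 < ε) (hμ : 0 < μ)
    (hr : 0 ≤ r) :
    (X + P) * X * ⟪u, θ - d⟫ ≤ ε * max (‖θ‖ ^ 2 - r) 0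
      + (X ^ 2 + P ^ 2) * X ^ 2 * ‖u‖ ^ 2 / (2 * ε) + X ^ 2 * (‖u‖ ^ 2 + (‖d‖ ^ 2 + r) / 2)
      + μ * X ^ 2 / 2 + P ^ 2 * ‖u‖ ^ 2 * (‖d‖ ^ 2 + r) / μ := by
  obtain ⟨α, β, rfl, hα, hβ⟩ := exists_add_eq_of_norm_sq_le_add (le_max_right _ 0) hr
    (by linarith [le_max_left (‖θ‖ ^ 2 - r) 0])
  set m := max (‖α + β‖ ^ 2 - r) 0
  have hCS : ∀ v, |⟪u, v⟫| ≤ ‖u‖ * ‖v‖ := abs_real_inner_le_norm u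
  have he : ‖β - d‖ ^ 2 ≤ 2 * (‖d‖ ^ 2 + r) := by
    nlinarith [norm_sub_le β d, norm_nonneg (β - d), sq_nonneg (‖β‖ - ‖d‖)]
  have hα' : (X + P) * X * ⟪u, α⟫ ≤ ε * m + (X ^ 2 + P ^ 2) * X ^ 2 * ‖u‖ ^ 2 / (2 * ε) := by
    set c := |(X + P) * X| * ‖u‖
    have hyoung := two_mul_le_add_mul_sq (a := ‖α‖) (b := c) (by positivity : 0 < 2 * ε)
    have hc : c ^ 2 ≤ 2 * ((X ^ 2 + P ^ 2) * X ^ 2 * ‖u‖ ^ 2) := by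
      rw [mul_pow, sq_abs]
      nlinarith [mul_nonneg (sq_nonneg (X - P)) (sq_nonneg (X * ‖u‖))]
    calc (X + P) * X * ⟪u, α⟫ ≤ ‖α‖ * c :=
          (le_abs_self _).trans (by rw [abs_mul, mul_comm ‖α‖, mul_assoc]; gcongr; exact hCS α)
      _ ≤ ε * ‖α‖ ^ 2 + (2 * ε)⁻¹ * (c ^ 2 / 2) := by linarith
      _ ≤ _ := by
          rw [div_eq_inv_mul _ (2 * ε)]
          gcongr
          linarith
  have hX : X * X * ⟪u, β - d⟫ ≤ X ^ 2 * (‖u‖ ^ 2 + (‖d‖ ^ 2 + r) / 2) := by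
    rw [← sq]
    refine mul_le_mul_of_nonneg_left ?_ (sq_nonneg X)
    nlinarith [real_inner_le_norm u (β - d), sq_nonneg (‖u‖ - ‖β - d‖ / 2)]
  have hP : P * X * ⟪u, β - d⟫ ≤ μ * X ^ 2 / 2 + P ^ 2 * ‖u‖ ^ 2 * (‖d‖ ^ 2 + r) / μ := by
    have hyoung := two_mul_le_add_mul_sq (a := X) (b := P * ⟪u, β - d⟫) hμ
    have hsq : ⟪u, β - d⟫ ^ 2 ≤ ‖u‖ ^ 2 * (2 * (‖d‖ ^ 2 + r)) := by
      rw [← sq_abs]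
      calc |⟪u, β - d⟫| ^ 2 ≤ (‖u‖ * ‖β - d‖) ^ 2 := by gcongr; exact hCS _
        _ ≤ _ := by rw [mul_pow]; gcongr
    rw [div_eq_inv_mul _ μ]
    nlinarith [mul_le_mul_of_nonneg_left hsq (mul_nonneg (inv_nonneg.2 hμ.le) (sq_nonneg P))]
  rw [add_sub_assoc, inner_add_right]
  linarith

end InnerProduct

def HasPartialDerivsAt (V : ℝ → ℝ → ℝ → ℝ → ℝ) (x₁ x₂ x₃ x₄ d₁ d₂ d₃ d₄ : ℝ) : Prop :=
  HasDerivAt (fun s => V s x₂ x₃ x₄) d₁ x₁ ∧ HasDerivAt (fun s => V x₁ s x₃ x₄) d₂ x₂ ∧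
    HasDerivAt (fun s => V x₁ x₂ s x₄) d₃ x₃ ∧ HasDerivAt (fun s => V x₁ x₂ x₃ s) d₄ x₄

namespace HasPartialDerivsAt

variable {V : ℝ → ℝ → ℝ → ℝ → ℝ} {x₁ x₂ x₃ x₄ d₁ d₂ d₃ d₄ : ℝ}

theorem sum_deriv_mul (h : HasPartialDerivsAt V x₁ x₂ x₃ x₄ d₁ d₂ d₃ d₄) (v₁ v₂ v₃ v₄ : ℝ) :
    deriv (fun s => V s x₂ x₃ x₄) x₁ * v₁ + deriv (fun s => V x₁ s x₃ x₄) x₂ * v₂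
      + deriv (fun s => V x₁ x₂ s x₄) x₃ * v₃ + deriv (fun s => V x₁ x₂ x₃ s) x₄ * v₄
      = d₁ * v₁ + d₂ * v₂ + d₃ * v₃ + d₄ * v₄ := by
  rw [h.1.deriv, h.2.1.deriv, h.2.2.1.deriv, h.2.2.2.deriv]

theorem half_sq_add_mul_sq {U : ℝ → ℝ → ℝ → ℝ → ℝ} {Q : ℝ}
    (hU : ∀ x₁ x₂ x₃ x₄, U x₁ x₂ x₃ x₄ = 1 / 2 * x₁ ^ 2 + Q / 2 * V x₁ x₂ x₃ x₄ ^ 2)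
    (h : HasPartialDerivsAt V x₁ x₂ x₃ x₄ d₁ d₂ d₃ d₄) :
    HasPartialDerivsAt U x₁ x₂ x₃ x₄ (x₁ + Q * V x₁ x₂ x₃ x₄ * d₁) (Q * V x₁ x₂ x₃ x₄ * d₂)
      (Q * V x₁ x₂ x₃ x₄ * d₃) (Q * V x₁ x₂ x₃ x₄ * d₄) := by
  obtain rfl : U = fun x₁ x₂ x₃ x₄ => 1 / 2 * x₁ ^ 2 + Q / 2 * V x₁ x₂ x₃ x₄ ^ 2 := by
    funext x₁ x₂ x₃ x₄
    exact hU x₁ x₂ x₃ x₄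
  have hsq {f : ℝ → ℝ} {f' x : ℝ} (hf : HasDerivAt f f' x) :
      HasDerivAt (fun s => Q / 2 * f s ^ 2) (Q * f x * f') x :=
    ((hf.pow 2).const_mul (Q / 2)).congr_deriv (by ring)
  obtain ⟨h₁, h₂, h₃, h₄⟩ := h
  exact ⟨(((hasDerivAt_pow 2 x₁).const_mul (1 / 2)).add (hsq h₁)).congr_deriv (by simp),
    (hsq h₂).const_add _, (hsq h₃).const_add _, (hsq h₄).const_add _⟩

theorem add_mul_sq_sub {W : ℝ → ℝ → ℝ → ℝ → ℝ} {c₃ c₄ θ₃ θ₄ : ℝ}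
    (hW : ∀ x₁ x₂ x₃ x₄,
      W x₁ x₂ x₃ x₄ = V x₁ x₂ x₃ x₄ + c₃ * (x₃ - θ₃) ^ 2 + c₄ * (x₄ - θ₄) ^ 2)
    (h : HasPartialDerivsAt V x₁ x₂ x₃ x₄ d₁ d₂ d₃ d₄) :
    HasPartialDerivsAt W x₁ x₂ x₃ x₄ d₁ d₂ (d₃ + 2 * c₃ * (x₃ - θ₃)) (d₄ + 2 * c₄ * (x₄ - θ₄)) := by
  obtain rfl : W = fun x₁ x₂ x₃ x₄ => V x₁ x₂ x₃ x₄ + c₃ * (x₃ - θ₃) ^ 2 + c₄ * (x₄ - θ₄) ^ 2 := by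
    funext x₁ x₂ x₃ x₄
    exact hW x₁ x₂ x₃ x₄
  have hsq (c θ x : ℝ) : HasDerivAt (fun s => c * (s - θ) ^ 2) (2 * c * (x - θ)) x :=
    ((((hasDerivAt_id' x).sub_const θ).pow 2).const_mul c).congr_deriv (by ring)
  obtain ⟨h₁, h₂, h₃, h₄⟩ := h
  exact ⟨(h₁.add_const _).add_const _, (h₂.add_const _).add_const _,
    (h₃.add (hsq c₃ θ₃ x₃)).add_const _, (h₄.add_const _).add (hsq c₄ θ₄ x₄)⟩

end HasPartialDerivsAt

namespace MooreGreitzer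

-- `gain` and `damping` are the paper's `M` and `G`.
def gain (μ ε r x₁ a b : ℝ) : ℝ :=
  2 * μ + (a ^ 2 + b ^ 2 + r) / 2 + x₁ ^ 2 + (1 + 1 / (2 * ε)) * x₁ ^ 4 + (1 / (2 * ε)) * x₁ ^ 6

theorem hasPartialDerivsAt_backstepping {μ ε r : ℝ} (hε : ε ≠ 0) {M z : ℝ → ℝ → ℝ → ℝ → ℝ}
    (hM : ∀ x₁ x₂ a b, M x₁ x₂ a b = gain μ ε r x₁ a b)
    (hz : ∀ x₁ x₂ a b, z x₁ x₂ a b = x₂ + a * x₁ ^ 2 + b * x₁ ^ 3 + M x₁ x₂ a b * x₁)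
    (x₁ x₂ a b : ℝ) :
    HasPartialDerivsAt z x₁ x₂ a b
      (2 * a * x₁ + 3 * b * x₁ ^ 2 + M x₁ x₂ a b
        + x₁ ^ 2 * (2 + 2 * ((2 * ε + 1) / ε) * x₁ ^ 2 + (3 / ε) * x₁ ^ 4))
      1 (x₁ * (x₁ + a)) (x₁ * (x₁ ^ 2 + b)) := by
  obtain rfl : z = fun x₁ x₂ a b => x₂ + a * x₁ ^ 2 + b * x₁ ^ 3 + gain μ ε r x₁ a b * x₁ := by
    funext x₁ x₂ a b
    rw [hz, hM]
  rw [hM]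
  unfold gain
  refine ⟨?_, ?_, ?_, ?_⟩
  · refine (((hasDerivAt_pow 2 x₁ |>.const_mul a |>.const_add x₂).add
      (hasDerivAt_pow 3 x₁ |>.const_mul b)).add ((((hasDerivAt_pow 2 x₁ |>.const_add _).add
      (hasDerivAt_pow 4 x₁ |>.const_mul _)).add (hasDerivAt_pow 6 x₁ |>.const_mul _)).mul
      (hasDerivAt_id' x₁))).congr_deriv ?_
    simp only [Pi.add_apply]
    field_simp
    ring
  · exact (((hasDerivAt_id x₂).add_const _).add_const _).add_const _
  · refine ((hasDerivAt_id a |>.mul_const (x₁ ^ 2) |>.const_add x₂ |>.add_const _).add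
      (hasDerivAt_pow 2 a |>.add_const _ |>.add_const _ |>.div_const 2 |>.const_add _
        |>.add_const _ |>.add_const _ |>.add_const _ |>.mul_const x₁)).congr_deriv ?_
    ring
  · refine ((hasDerivAt_id b |>.mul_const (x₁ ^ 3) |>.const_add _).add
      (hasDerivAt_pow 2 b |>.const_add _ |>.add_const _ |>.div_const 2 |>.const_add _
        |>.add_const _ |>.add_const _ |>.add_const _ |>.mul_const x₁)).congr_deriv ?_
    ring

def damping (Q μ ε r x₁ a b φ : ℝ) : ℝ :=
  μ + Q * x₁ ^ 2 * (1 + x₁ ^ 2) * φ ^ 2 * (x₁ ^ 2 / (2 * ε) + (a ^ 2 + b ^ 2 + r) / μ)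

variable {Q μ ε r : ℝ}

theorem neg_dissipation_le (hQ : 0 < Q) (hμ : 0 < μ) (hε : 0 < ε) (hr : 0 ≤ r) (X Z a b φ : ℝ) :
    -(gain μ ε r X a b * X ^ 2 + Q * damping Q μ ε r X a b φ * Z ^ 2)
      ≤ -μ * (1 / 2 * X ^ 2 + Q / 2 * Z ^ 2) := by
  have hgain : 2 * μ ≤ gain μ ε r X a b := by
    unfold gain
    have : 0 ≤ (a ^ 2 + b ^ 2 + r) / 2 + X ^ 2 + (1 + 1 / (2 * ε)) * X ^ 4
        + 1 / (2 * ε) * X ^ 6 := by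
      positivity
    linarith
  have hdamping : μ ≤ damping Q μ ε r X a b φ := le_add_of_nonneg_right (by positivity)
  linarith [mul_le_mul_of_nonneg_right hgain (sq_nonneg X),
    mul_le_mul_of_nonneg_right hdamping (mul_nonneg hQ.le (sq_nonneg Z)),
    mul_nonneg hμ.le (sq_nonneg X), mul_nonneg (mul_nonneg hμ.le hQ.le) (sq_nonneg Z)]

theorem adaptation_error_sub_dissipation_le (hQ : 0 < Q) (hμ : 0 < μ) (hε : 0 < ε) (hr : 0 ≤ r)
    (θ₁ θ₂ X Z a b φ : ℝ) :
    (X + Q * Z * φ) * ((θ₁ - a) * X ^ 2 + (θ₂ - b) * X ^ 3)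
      - (gain μ ε r X a b * X ^ 2 + Q * damping Q μ ε r X a b φ * Z ^ 2)
      ≤ -μ * (1 / 2 * X ^ 2 + Q / 2 * Z ^ 2) + ε * max (θ₁ ^ 2 + θ₂ ^ 2 - r) 0 := by
  have h := add_mul_mul_inner_sub_le !₂[X, X ^ 2] !₂[θ₁, θ₂] !₂[a, b] X (Q * Z * φ) hε hμ hr
  simp only [EuclideanSpace.real_norm_sq_eq, PiLp.inner_apply, PiLp.sub_apply, RCLike.inner_apply,
    Real.ringHom_apply, Fin.sum_univ_two, Fin.isValue, Matrix.cons_val_zero, Matrix.cons_val_one,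
    Matrix.cons_val_fin_one] at h
  have hD : gain μ ε r X a b * X ^ 2 + Q * damping Q μ ε r X a b φ * Z ^ 2
      = (X ^ 2 + (Q * Z * φ) ^ 2) * X ^ 2 * (X ^ 2 + (X ^ 2) ^ 2) / (2 * ε)
        + X ^ 2 * (X ^ 2 + (X ^ 2) ^ 2 + (a ^ 2 + b ^ 2 + r) / 2) + μ * X ^ 2 / 2
        + (Q * Z * φ) ^ 2 * (X ^ 2 + (X ^ 2) ^ 2) * (a ^ 2 + b ^ 2 + r) / μ
        + (3 / 2 * μ * X ^ 2 + Q * μ * Z ^ 2) := by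
    unfold gain damping
    ring
  linarith [mul_nonneg hμ.le (sq_nonneg X), mul_nonneg (mul_nonneg hQ.le hμ.le) (sq_nonneg Z)]

end MooreGreitzer

/-- New adaptive controller for the simplified Moore–Greitzer jet engine model: along the
closed-loop vector field the derivative of `W` is at most `−μU` and the derivative of `U` is at
most `−μU + ε(θ₁² + θ₂² − r)⁺`. -/
theorem moore_greitzer_new_controller
    (Q γ₁ γ₂ μ ε r : ℝ) (hQ : 0 < Q) (hγ₁ : 0 < γ₁) (hγ₂ : 0 < γ₂) (hμ : 0 < μ)
    (hε : 0 < ε) (hr : 0 ≤ r) (θ₁ θ₂ : ℝ)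
    (M z φ G w₁ w₂ u U W : ℝ → ℝ → ℝ → ℝ → ℝ)
    (hM : ∀ x₁ x₂ a b, M x₁ x₂ a b =
      2 * μ + (a ^ 2 + b ^ 2 + r) / 2 + x₁ ^ 2 + (1 + 1 / (2 * ε)) * x₁ ^ 4
        + (1 / (2 * ε)) * x₁ ^ 6)
    (hz : ∀ x₁ x₂ a b, z x₁ x₂ a b =
      x₂ + a * x₁ ^ 2 + b * x₁ ^ 3 + M x₁ x₂ a b * x₁)
    (hφ : ∀ x₁ x₂ a b, φ x₁ x₂ a b =
      2 * a * x₁ + 3 * b * x₁ ^ 2 + M x₁ x₂ a b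
        + x₁ ^ 2 * (2 + 2 * ((2 * ε + 1) / ε) * x₁ ^ 2 + (3 / ε) * x₁ ^ 4))
    (hG : ∀ x₁ x₂ a b, G x₁ x₂ a b =
      μ + Q * x₁ ^ 2 * (1 + x₁ ^ 2) * (φ x₁ x₂ a b) ^ 2 *
        (x₁ ^ 2 / (2 * ε) + (a ^ 2 + b ^ 2 + r) / μ))
    (hw₁ : ∀ x₁ x₂ a b, w₁ x₁ x₂ a b = γ₁ * x₁ ^ 2 * (Q * z x₁ x₂ a b * φ x₁ x₂ a b + x₁))
    (hw₂ : ∀ x₁ x₂ a b, w₂ x₁ x₂ a b = γ₂ * x₁ ^ 3 * (Q * z x₁ x₂ a b * φ x₁ x₂ a b + x₁))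
    (hu : ∀ x₁ x₂ a b, u x₁ x₂ a b =
      -Q⁻¹ * x₁ - (x₁ + a) * x₁ * w₁ x₁ x₂ a b - (x₁ ^ 2 + b) * x₁ * w₂ x₁ x₂ a b
        - G x₁ x₂ a b * z x₁ x₂ a b + φ x₁ x₂ a b * (M x₁ x₂ a b * x₁ - z x₁ x₂ a b))
    (hU : ∀ x₁ x₂ a b, U x₁ x₂ a b = 1 / 2 * x₁ ^ 2 + Q / 2 * (z x₁ x₂ a b) ^ 2)
    (hW : ∀ x₁ x₂ a b, W x₁ x₂ a b =
      U x₁ x₂ a b + 1 / (2 * γ₁) * (a - θ₁) ^ 2 + 1 / (2 * γ₂) * (b - θ₂) ^ 2) :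
    ∀ x₁ x₂ a b : ℝ,
      (deriv (fun s => W s x₂ a b) x₁ * (θ₁ * x₁ ^ 2 + θ₂ * x₁ ^ 3 + x₂)
          + deriv (fun s => W x₁ s a b) x₂ * u x₁ x₂ a b
          + deriv (fun s => W x₁ x₂ s b) a * w₁ x₁ x₂ a b
          + deriv (fun s => W x₁ x₂ a s) b * w₂ x₁ x₂ a b
        ≤ -μ * U x₁ x₂ a b) ∧
      (deriv (fun s => U s x₂ a b) x₁ * (θ₁ * x₁ ^ 2 + θ₂ * x₁ ^ 3 + x₂)
          + deriv (fun s => U x₁ s a b) x₂ * u x₁ x₂ a b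
          + deriv (fun s => U x₁ x₂ s b) a * w₁ x₁ x₂ a b
          + deriv (fun s => U x₁ x₂ a s) b * w₂ x₁ x₂ a b
        ≤ -μ * U x₁ x₂ a b + ε * max (θ₁ ^ 2 + θ₂ ^ 2 - r) 0) := by
  intro x₁ x₂ a b
  have hz' := MooreGreitzer.hasPartialDerivsAt_backstepping hε.ne' hM hz x₁ x₂ a b
  rw [← hφ] at hz'
  have hU' := hz'.half_sq_add_mul_sq hU
  rw [(hU'.add_mul_sq_sub hW).sum_deriv_mul, hU'.sum_deriv_mul]
  set Z := z x₁ x₂ a b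
  set P := Q * Z * φ x₁ x₂ a b
  have hUdot : (x₁ + P) * (θ₁ * x₁ ^ 2 + θ₂ * x₁ ^ 3 + x₂) + Q * Z * 1 * u x₁ x₂ a b
        + Q * Z * (x₁ * (x₁ + a)) * w₁ x₁ x₂ a b + Q * Z * (x₁ * (x₁ ^ 2 + b)) * w₂ x₁ x₂ a b
      = (x₁ + P) * ((θ₁ - a) * x₁ ^ 2 + (θ₂ - b) * x₁ ^ 3)
        - (M x₁ x₂ a b * x₁ ^ 2 + Q * G x₁ x₂ a b * Z ^ 2) := by
    rw [hu]
    linear_combination (-(x₁ + P)) * hz x₁ x₂ a b - x₁ * Z * mul_inv_cancel₀ hQ.ne'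
  constructor
  · calc _ = -(M x₁ x₂ a b * x₁ ^ 2 + Q * G x₁ x₂ a b * Z ^ 2) := by
          rw [hw₁, hw₂] at hUdot ⊢
          field_simp
          linear_combination hUdot
      _ ≤ -μ * U x₁ x₂ a b := by
          rw [hU, hM, hG]
          exact MooreGreitzer.neg_dissipation_le hQ hμ hε hr x₁ Z a b _
  · calc _ = _ := hUdot
      _ ≤ _ := by
          rw [hU, hM, hG]
          exact MooreGreitzer.adaptation_error_sub_dissipation_le hQ hμ hε hr θ₁ θ₂ x₁ Z a b _

end
end
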